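/- arXiv:2504.08911 — 2 statements merged into one kernel-verified Lean document; each statement's English description precedes it below -/
import Mathlib

section
/- Modulo the Gröbner basis 𝒢₀ of rank-1 binomials, the monomial x_{a^1} ⋯ x_{a^k} reduces to x_{b^1} ⋯ x_{b^k}, where for each coordinate i the tuple (b^1_i, ..., b^k_i) is the ascending sort of (a^1_i, ..., a^k_i). -/
open MvPolynomial

/-- Multi-index set `[n₁] × ⋯ × [n_d]`. -/
abbrev Idx {d : ℕ} (n : Fin d → ℕ) : Type := ∀ i, Fin (n i)

/-- Componentwise minimum of multi-indices. -/
def amin {d : ℕ} {n : Fin d → ℕ} (a b : Idx n) : Idx n := fun i => min (a i) (b i)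

/-- Componentwise maximum of multi-indices. -/
def amax {d : ℕ} {n : Fin d → ℕ} (a b : Idx n) : Idx n := fun i => max (a i) (b i)

/-- Lexicographic order on multi-indices: `a < b` iff at the first position where they
differ, `a` is smaller.  (With this convention the variable `x_a` is *larger* in the
variable order `x_{1⋯1} > x_{1⋯2} > ⋯ > x_{n₁⋯n_d}` exactly when `a` is lexicographically
smaller.) -/
def idxLt {d : ℕ} {n : Fin d → ℕ} (a b : Idx n) : Prop :=
  ∃ i, a i < b i ∧ ∀ j, j < i → a j = b j

/-- Total degree of an exponent vector. -/
def expDeg {σ : Type*} (α : σ →₀ ℕ) : ℕ := α.sum fun _ k => k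

/-- The graded reverse lexicographic order on exponent vectors (viewing the variable
`x_a` with lexicographically smaller index `a` as the larger variable): `α < β` iff
`deg α < deg β`, or the degrees agree and at the largest (in the variable order, i.e.
lexicographically largest) index where they differ, `α` has the *larger* exponent. -/
def grevlexLt {d : ℕ} {n : Fin d → ℕ} (α β : Idx n →₀ ℕ) : Prop :=
  expDeg α < expDeg β ∨
    (expDeg α = expDeg β ∧ ∃ j, β j < α j ∧ ∀ k, idxLt j k → α k = β k)

/-- `m` is the leading monomial (w.r.t. grevlex) of the polynomial `f`. -/
def IsLeadMon {d : ℕ} {n : Fin d → ℕ} (f : MvPolynomial (Idx n) ℝ)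
    (m : Idx n →₀ ℕ) : Prop :=
  m ∈ f.support ∧ ∀ m' ∈ f.support, m' ≠ m → grevlexLt m' m

/-- `G` is a Gröbner basis of the ideal `I` w.r.t. grevlex: `G` generates `I` and the
leading monomial of every nonzero element of `I` is divisible by the leading monomial of
some element of `G`. -/
def IsGroebnerBasis {d : ℕ} {n : Fin d → ℕ} (G : Set (MvPolynomial (Idx n) ℝ))
    (I : Ideal (MvPolynomial (Idx n) ℝ)) : Prop :=
  Ideal.span G = I ∧
    ∀ f ∈ I, f ≠ 0 → ∀ m, IsLeadMon f m →
      ∃ g ∈ G, ∃ mg, IsLeadMon g mg ∧ mg ≤ m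

/-- `G` is a *reduced* Gröbner basis of `I`: it is a Gröbner basis, every element is monic,
and no monomial of an element of `G` is divisible by the leading monomial of another
element of `G`. -/
def IsReducedGroebnerBasis {d : ℕ} {n : Fin d → ℕ} (G : Set (MvPolynomial (Idx n) ℝ))
    (I : Ideal (MvPolynomial (Idx n) ℝ)) : Prop :=
  IsGroebnerBasis G I ∧
    ∀ g ∈ G, (∀ m, IsLeadMon g m → coeff m g = 1) ∧
      ∀ m ∈ g.support, ∀ g' ∈ G, g' ≠ g → ∀ m', IsLeadMon g' m' → ¬ m' ≤ m

/-- The set of rank-1 binomials `x_a x_b − x_{a∧b} x_{a∨b}`. -/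
noncomputable def rk1Binomials {d : ℕ} (n : Fin d → ℕ) : Set (MvPolynomial (Idx n) ℝ) :=
  {f | ∃ a b : Idx n, f = X a * X b - X (amin a b) * X (amax a b)}

/-- The ideal `I₀` generated by all rank-1 binomials. -/
noncomputable def I0 {d : ℕ} (n : Fin d → ℕ) : Ideal (MvPolynomial (Idx n) ℝ) :=
  Ideal.span (rk1Binomials n)

/-- The reduced Gröbner basis `𝒢₀` of `I₀`. -/
noncomputable def G0 {d : ℕ} (n : Fin d → ℕ) : Set (MvPolynomial (Idx n) ℝ) :=
  {f | ∃ a b : Idx n, idxLt a b ∧ (∃ i, b i < a i) ∧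
    f = X a * X b - X (amin a b) * X (amax a b)}

/-- `r` is a normal form of `f` modulo `G`: the difference lies in the ideal generated by
`G`, and no monomial of `r` is divisible by a leading monomial of an element of `G`. -/
def ReducesTo {d : ℕ} {n : Fin d → ℕ} (G : Set (MvPolynomial (Idx n) ℝ))
    (f r : MvPolynomial (Idx n) ℝ) : Prop :=
  f - r ∈ Ideal.span G ∧
    ∀ m ∈ r.support, ∀ g ∈ G, ∀ mg, IsLeadMon g mg → ¬ mg ≤ m

/-!
Both the ideal membership and the normal form rest on the lattice structure of the
multi-indices: `x_u x_v ≡ x_{u ⊓ v} x_{u ⊔ v}` modulo `𝒢₀` for every pair `u, v`, and for an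
incomparable pair the leading monomial of this binomial is `x_u x_v`, because `u ⊔ v` lies
lexicographically above both `u` and `v`. Replacing `(a^l, a^{l'})` by
`(a^l ⊓ a^{l'}, a^l ⊔ a^{l'})` for `l < l'` therefore keeps the class of the monomial and
strictly decreases the weighted size `∑_l (k - l) |a^l|` unless `a^l ≤ a^{l'}`, so the process
ends at the column-wise sort `b`. A product of the `x_{b^l}` is divisible by no leading
monomial `x_u x_v` of `𝒢₀`, since the `b^l` form a chain.
-/

@[to_additive]
lemma Finset.prod_eq_mul_mul_prod_compl_pair {ι M : Type*} [Fintype ι] [DecidableEq ι]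
    [CommMonoid M] {l l' : ι} (h : l ≠ l') (g : ι → M) :
    ∏ j, g j = g l * g l' * ∏ j ∈ {l, l'}ᶜ, g j := by
  rw [← Finset.prod_mul_prod_compl {l, l'}, Finset.prod_pair h]

section Order

variable {d : ℕ} {n : Fin d → ℕ}

lemma expDeg_eq_degree {σ : Type*} (α : σ →₀ ℕ) : expDeg α = α.degree := rfl

lemma idxLt_iff_toLex_lt {u v : Idx n} : idxLt u v ↔ toLex u < toLex v :=
  exists_congr fun _ => and_comm

lemma idxLt_of_lt {u v : Idx n} (h : u < v) : idxLt u v :=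
  idxLt_iff_toLex_lt.2 (Pi.toLex_strictMono h)

end Order

section Binomial

variable {d : ℕ} {n : Fin d → ℕ}

lemma X_mul_X_sub_mem_span_G0 (u v : Idx n) :
    (X u * X v - X (u ⊓ v) * X (u ⊔ v) : MvPolynomial (Idx n) ℝ) ∈ Ideal.span (G0 n) := by
  by_cases huv : u ≤ v
  · rw [inf_eq_left.2 huv, sup_eq_right.2 huv, sub_self]
    exact zero_mem _
  by_cases hvu : v ≤ u
  · rw [inf_eq_right.2 hvu, sup_eq_left.2 hvu, mul_comm, sub_self]
    exact zero_mem _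
  obtain ⟨i, hi⟩ : ∃ i, v i < u i := by simpa [Pi.le_def] using huv
  obtain ⟨j, hj⟩ : ∃ j, u j < v j := by simpa [Pi.le_def] using hvu
  rcases lt_trichotomy (toLex u) (toLex v) with h | h | h
  · exact Ideal.subset_span ⟨u, v, idxLt_iff_toLex_lt.2 h, ⟨i, hi⟩, rfl⟩
  · exact absurd (toLex.injective h).le huv
  · rw [mul_comm (X u), inf_comm, sup_comm]
    exact Ideal.subset_span ⟨v, u, idxLt_iff_toLex_lt.2 h, ⟨j, hj⟩, rfl⟩

lemma not_grevlexLt_single_add_single {u v : Idx n} (huv : ¬ u ≤ v) (hvu : ¬ v ≤ u) :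
    ¬ grevlexLt (Finsupp.single u 1 + Finsupp.single v 1)
      (Finsupp.single (u ⊓ v) 1 + Finsupp.single (u ⊔ v) 1) := by
  have hu : u < u ⊔ v := left_lt_sup.2 hvu
  have hv : v < u ⊔ v := right_lt_sup.2 huv
  rintro (hdeg | ⟨-, j, hj, hagree⟩)
  · simp [expDeg_eq_degree] at hdeg
  · have hj' : j = u ∨ j = v := by
      by_contra! hne
      simp [Finsupp.single_apply, Ne.symm hne.1, Ne.symm hne.2] at hj
    have hsup := hagree (u ⊔ v) (by rcases hj' with rfl | rfl <;> exact idxLt_of_lt ‹_›)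
    simp [Finsupp.single_apply, hu.ne, hv.ne] at hsup

lemma X_mul_X_eq_monomial (u v : Idx n) :
    (X u * X v : MvPolynomial (Idx n) ℝ) =
      monomial (Finsupp.single u 1 + Finsupp.single v 1) 1 := by
  rw [X, X, monomial_mul, one_mul]

lemma eq_of_isLeadMon_X_mul_X_sub {u v : Idx n} (huv : ¬ u ≤ v) (hvu : ¬ v ≤ u)
    {mg : Idx n →₀ ℕ} (h : IsLeadMon (X u * X v - X (u ⊓ v) * X (u ⊔ v)) mg) :
    mg = Finsupp.single u 1 + Finsupp.single v 1 := by
  classical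
  set α : Idx n →₀ ℕ := Finsupp.single u 1 + Finsupp.single v 1
  set β : Idx n →₀ ℕ := Finsupp.single (u ⊓ v) 1 + Finsupp.single (u ⊔ v) 1
  have hαβ : α ≠ β := fun he => by
    have hsup := DFunLike.congr_fun he (u ⊔ v)
    simp [α, β, Finsupp.single_apply, (left_lt_sup.2 hvu).ne, (right_lt_sup.2 huv).ne] at hsup
  rw [X_mul_X_eq_monomial, X_mul_X_eq_monomial] at h
  obtain ⟨hmem, hlead⟩ := h
  have hα : α ∈ (monomial α 1 - monomial β (1 : ℝ)).support := by
    simp [mem_support_iff, coeff_monomial, hαβ.symm]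
  rcases Finset.mem_union.1 (support_sub _ _ _ hmem) with hm | hm
  · exact Finset.mem_singleton.1 (support_monomial_subset hm)
  · obtain rfl := Finset.mem_singleton.1 (support_monomial_subset hm)
    exact absurd (hlead α hα hαβ) (not_grevlexLt_single_add_single huv hvu)

end Binomial

section NormalForm

variable {d : ℕ} {n : Fin d → ℕ} {k : ℕ}

lemma prod_X_eq_monomial (b : Fin k → Idx n) :
    (∏ l, X (b l) : MvPolynomial (Idx n) ℝ) = monomial (∑ l, Finsupp.single (b l) 1) 1 :=
  (monomial_sum_one _ _).symm

lemma not_single_add_single_le_of_monotone {b : Fin k → Idx n} (hb : Monotone b)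
    {u v : Idx n} (huv : ¬ u ≤ v) (hvu : ¬ v ≤ u) :
    ¬ Finsupp.single u 1 + Finsupp.single v 1 ≤ ∑ l, Finsupp.single (b l) 1 := by
  classical
  intro hle
  have hrange : ∀ w ∈ (Finsupp.single u 1 + Finsupp.single v 1).support, w ∈ Set.range b := by
    intro w hw
    obtain ⟨l, -, hl⟩ :=
      Finset.mem_biUnion.1 (Finsupp.support_finsetSum (Finsupp.support_mono hle hw))
    exact ⟨l, (Finset.mem_singleton.1 (Finsupp.support_single_subset hl)).symm⟩
  obtain ⟨l, rfl⟩ := hrange u (by simp [Finsupp.single_apply])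
  obtain ⟨l', rfl⟩ := hrange v (by simp [Finsupp.single_apply])
  rcases le_total l l' with h | h
  exacts [huv (hb h), hvu (hb h)]

lemma not_isLeadMon_G0_le_of_monotone {b : Fin k → Idx n} (hb : Monotone b) :
    ∀ m ∈ (∏ l, X (b l) : MvPolynomial (Idx n) ℝ).support,
      ∀ g ∈ G0 n, ∀ mg, IsLeadMon g mg → ¬ mg ≤ m := by
  rintro m hm g ⟨u, v, hlex, ⟨i, hi⟩, rfl⟩ mg hmg
  have huv : ¬ u ≤ v := fun h => (h i).not_gt hi
  have hvu : ¬ v ≤ u := fun h => (idxLt_iff_toLex_lt.1 hlex).not_ge (Pi.toLex_monotone h)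
  rw [prod_X_eq_monomial] at hm
  rw [eq_of_isLeadMon_X_mul_X_sub huv hvu hmg,
    Finset.mem_singleton.1 (support_monomial_subset hm)]
  exact not_single_add_single_le_of_monotone hb huv hvu

end NormalForm

section Sorting

variable {d : ℕ} {n : Fin d → ℕ} {k : ℕ}

def ColumnPerm (a b : Fin k → Idx n) : Prop :=
  ∀ i, ∃ π : Equiv.Perm (Fin k), ∀ l, b l i = a (π l) i

lemma ColumnPerm.eq_of_monotone {a b : Fin k → Idx n} (h : ColumnPerm a b) (ha : Monotone a)
    (hb : Monotone b) : a = b := by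
  funext l i
  obtain ⟨π, hπ⟩ := h i
  have hcol : (fun l => a l i) ∘ π = (fun l => a l i) ∘ (1 : Equiv.Perm (Fin k)) :=
    Tuple.unique_monotone (by simpa [Function.comp_def, ← hπ] using monotone_iff_apply₂.1 hb i)
      (by simpa using monotone_iff_apply₂.1 ha i)
  rw [hπ]
  exact (congrFun hcol l).symm

def idxSum (u : Idx n) : ℕ := ∑ i, (u i : ℕ)

lemma idxSum_inf_add_idxSum_sup (u v : Idx n) :
    idxSum (u ⊓ v) + idxSum (u ⊔ v) = idxSum u + idxSum v := by
  simp only [idxSum, ← Finset.sum_add_distrib]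
  exact Finset.sum_congr rfl fun i _ => by simp [Fin.coe_min, Fin.coe_max, min_add_max]

lemma idxSum_inf_lt {u v : Idx n} (h : ¬ u ≤ v) : idxSum (u ⊓ v) < idxSum u := by
  obtain ⟨i, hi⟩ : ∃ i, v i < u i := by simpa [Pi.le_def] using h
  refine Finset.sum_lt_sum (fun j _ => ?_) ⟨i, Finset.mem_univ i, ?_⟩
  · simp [Fin.coe_min]
  · simpa [Fin.coe_min] using hi

def potential (a : Fin k → Idx n) : ℕ := ∑ l : Fin k, (k - (l : ℕ)) * idxSum (a l)

def sortPair (a : Fin k → Idx n) (l l' : Fin k) : Fin k → Idx n :=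
  Function.update (Function.update a l (a l ⊓ a l')) l' (a l ⊔ a l')

section
variable {a : Fin k → Idx n} {l l' : Fin k}

lemma sortPair_apply_left (h : l ≠ l') : sortPair a l l' l = a l ⊓ a l' := by
  simp [sortPair, h]

lemma sortPair_apply_right : sortPair a l l' l' = a l ⊔ a l' := by
  simp [sortPair]

lemma sortPair_apply_of_ne {j : Fin k} (hl : j ≠ l) (hl' : j ≠ l') :
    sortPair a l l' j = a j := by
  simp [sortPair, hl, hl']

lemma exists_perm_sortPair_apply (h : l ≠ l') (i : Fin d) :
    ∃ σ : Equiv.Perm (Fin k), ∀ j, sortPair a l l' j i = a (σ j) i := by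
  by_cases hle : a l i ≤ a l' i
  · refine ⟨1, fun j => ?_⟩
    by_cases hl : j = l
    · subst hl; simp [sortPair_apply_left h, hle]
    by_cases hl' : j = l'
    · subst hl'; simp [sortPair_apply_right, hle]
    simp [sortPair_apply_of_ne hl hl']
  · refine ⟨Equiv.swap l l', fun j => ?_⟩
    have hge := (not_le.1 hle).le
    by_cases hl : j = l
    · subst hl; simp [sortPair_apply_left h, hge]
    by_cases hl' : j = l'
    · subst hl'; simp [sortPair_apply_right, hge]
    simp [sortPair_apply_of_ne hl hl', Equiv.swap_apply_of_ne_of_ne hl hl']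

lemma ColumnPerm.sortPair {b : Fin k → Idx n} (hab : ColumnPerm a b) (h : l ≠ l') :
    ColumnPerm (sortPair a l l') b := by
  intro i
  obtain ⟨π, hπ⟩ := hab i
  obtain ⟨σ, hσ⟩ := exists_perm_sortPair_apply (a := a) h i
  exact ⟨σ⁻¹ * π, fun j => by rw [hπ, Equiv.Perm.mul_apply, hσ]; simp⟩

lemma prod_sortPair {M : Type*} [CommMonoid M] {f : Idx n → M}
    (hf : ∀ u v, f u * f v = f (u ⊓ v) * f (u ⊔ v)) (h : l ≠ l') :
    ∏ j, f (sortPair a l l' j) = ∏ j, f (a j) := by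
  classical
  rw [Finset.prod_eq_mul_mul_prod_compl_pair h, Finset.prod_eq_mul_mul_prod_compl_pair h,
    sortPair_apply_left h, sortPair_apply_right, ← hf]
  congr 1
  refine Finset.prod_congr rfl fun j hj => ?_
  simp only [Finset.mem_compl, Finset.mem_insert, Finset.mem_singleton, not_or] at hj
  rw [sortPair_apply_of_ne hj.1 hj.2]

lemma potential_sortPair_lt (hll' : l < l') (h : ¬ a l ≤ a l') :
    potential (sortPair a l l') < potential a := by
  classical
  have hw : k - (l' : ℕ) < k - l := by omega
  have hmod := idxSum_inf_add_idxSum_sup (a l) (a l')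
  have hinf := idxSum_inf_lt h
  rw [potential, potential, Finset.sum_eq_add_add_sum_compl_pair hll'.ne,
    Finset.sum_eq_add_add_sum_compl_pair hll'.ne, sortPair_apply_left hll'.ne,
    sortPair_apply_right]
  have hrest : ∑ j ∈ {l, l'}ᶜ, (k - (j : ℕ)) * idxSum (sortPair a l l' j) =
      ∑ j ∈ {l, l'}ᶜ, (k - (j : ℕ)) * idxSum (a j) := by
    refine Finset.sum_congr rfl fun j hj => ?_
    simp only [Finset.mem_compl, Finset.mem_insert, Finset.mem_singleton, not_or] at hj
    rw [sortPair_apply_of_ne hj.1 hj.2]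
  rw [hrest, add_lt_add_iff_right]
  nlinarith

end

theorem prod_eq_prod_of_columnPerm {M : Type*} [CommMonoid M] {f : Idx n → M}
    (hf : ∀ u v, f u * f v = f (u ⊓ v) * f (u ⊔ v)) {b : Fin k → Idx n} (hb : Monotone b)
    (a : Fin k → Idx n) (hab : ColumnPerm a b) : ∏ l, f (a l) = ∏ l, f (b l) := by
  induction hN : potential a using Nat.strong_induction_on generalizing a with
  | _ N ih =>
  by_cases ha : Monotone a
  · rw [hab.eq_of_monotone ha hb]
  obtain ⟨l, l', hll', hnot⟩ : ∃ l l', l < l' ∧ ¬ a l ≤ a l' := by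
    simp only [Monotone, not_forall] at ha
    obtain ⟨l, l', hle, hnot⟩ := ha
    exact ⟨l, l', hle.lt_of_ne (by rintro rfl; exact hnot le_rfl), hnot⟩
  rw [← prod_sortPair hf hll'.ne]
  exact ih _ (hN ▸ potential_sortPair_lt hll' hnot) _ (hab.sortPair hll'.ne) rfl

end Sorting

lemma prod_X_sub_prod_X_mem_span_G0 {d : ℕ} {n : Fin d → ℕ} {k : ℕ} {b : Fin k → Idx n}
    (hb : Monotone b) (a : Fin k → Idx n) (hab : ColumnPerm a b) :
    (∏ l, X (a l) - ∏ l, X (b l) : MvPolynomial (Idx n) ℝ) ∈ Ideal.span (G0 n) := by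
  rw [← Ideal.Quotient.eq, map_prod, map_prod]
  refine prod_eq_prod_of_columnPerm (f := fun u => Ideal.Quotient.mk _ (X u))
    (fun u v => ?_) hb a hab
  rw [← map_mul, ← map_mul, Ideal.Quotient.eq]
  exact X_mul_X_sub_mem_span_G0 u v

/-- Modulo `𝒢₀`, the monomial `x_{a¹} ⋯ x_{a^k}` reduces to `x_{b¹} ⋯ x_{b^k}`, where for
each coordinate `i` the tuple `(b¹_i, …, b^k_i)` is the ascending sort (a monotone
rearrangement) of `(a¹_i, …, a^k_i)`. -/
theorem reduction_mod_G0_sorts {d : ℕ} {n : Fin d → ℕ} (k : ℕ)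
    (a b : Fin k → Idx n)
    (hmono : ∀ i : Fin d, Monotone fun l : Fin k => b l i)
    (hperm : ∀ i : Fin d, ∃ π : Equiv.Perm (Fin k), ∀ l, b l i = a (π l) i) :
    ReducesTo (G0 n) (∏ l, X (a l)) (∏ l, X (b l)) := by
  have hb : Monotone b := monotone_iff_apply₂.2 hmono
  exact ⟨prod_X_sub_prod_X_mem_span_G0 hb a hperm, not_isLeadMon_G0_le_of_monotone hb⟩
end

section
/- The set 𝒢_∞ = { x_a² − 1 : a ∈ [𝐧] } ∪ { x_a x_b − x_{a∧̄b} x_{a∨̄b} : a < b and (a_i > b_i or a_i = b_i < n_i) for some i } is a reduced Gröbner basis of I_∞ = ⟨ x_a² − 1, x_a x_b − x_{a∧b} x_{a∨b} ⟩ with respect to grevlex. -/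
open MvPolynomial

/-- The largest element of `Fin m` (corresponding to the index value `n_i`). -/
def lastF (m : ℕ) [NeZero m] : Fin m :=
  ⟨m - 1, Nat.sub_lt (Nat.pos_of_ne_zero (NeZero.ne m)) one_pos⟩

/-- `(a ∧̄ b)_i = min(a_i, b_i)` if `a_i ≠ b_i`, and `n_i` otherwise. -/
def bmin {d : ℕ} {n : Fin d → ℕ} [∀ i, NeZero (n i)] (a b : Idx n) : Idx n :=
  fun i => if a i = b i then lastF (n i) else min (a i) (b i)

/-- `(a ∨̄ b)_i = max(a_i, b_i)` if `a_i ≠ b_i`, and `n_i` otherwise. -/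
def bmax {d : ℕ} {n : Fin d → ℕ} [∀ i, NeZero (n i)] (a b : Idx n) : Idx n :=
  fun i => if a i = b i then lastF (n i) else max (a i) (b i)

/-- The ideal `I_∞ = ⟨x_a² − 1, x_a x_b − x_{a∧b} x_{a∨b} : a, b ∈ [𝐧]⟩`. -/
noncomputable def Iinf {d : ℕ} (n : Fin d → ℕ) : Ideal (MvPolynomial (Idx n) ℝ) :=
  Ideal.span ({f | ∃ a : Idx n, f = X a ^ 2 - 1} ∪ rk1Binomials n)

/-- `𝒢_∞ = {x_a² − 1} ∪ {x_a x_b − x_{a∧̄b} x_{a∨̄b} : a < b and (a_i > b_i or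
a_i = b_i < n_i) for some i}`. -/
noncomputable def Ginf {d : ℕ} (n : Fin d → ℕ) [∀ i, NeZero (n i)] :
    Set (MvPolynomial (Idx n) ℝ) :=
  {f | ∃ a : Idx n, f = X a ^ 2 - 1} ∪
    {f | ∃ a b : Idx n, idxLt a b ∧
      (∃ i, b i < a i ∨ (a i = b i ∧ a i < lastF (n i))) ∧
      f = X a * X b - X (bmin a b) * X (bmax a b)}


section Order
variable {d : ℕ} {n : Fin d → ℕ}

lemma idxLt_irrefl (a : Idx n) : ¬ idxLt a a := by
  rintro ⟨i, hi, -⟩; exact lt_irrefl _ hi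

lemma idxLt_asymm {a b : Idx n} (h : idxLt a b) : ¬ idxLt b a := by
  rintro ⟨i, hi, hj⟩
  obtain ⟨i', hi', hj'⟩ := h
  rcases lt_trichotomy i i' with h1 | h1 | h1
  · rw [hj' i h1] at hi; exact lt_irrefl _ hi
  · subst h1; exact lt_irrefl _ (hi.trans hi')
  · rw [hj i' h1] at hi'; exact lt_irrefl _ hi'

lemma idxLt_ne {a b : Idx n} (h : idxLt a b) : a ≠ b := by
  rintro rfl; exact idxLt_irrefl a h

lemma idxLt_trans {a b c : Idx n} (h1 : idxLt a b) (h2 : idxLt b c) : idxLt a c := by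
  obtain ⟨i, hi, hj⟩ := h1
  obtain ⟨i', hi', hj'⟩ := h2
  rcases lt_trichotomy i i' with h | h | h
  · exact ⟨i, by rw [← hj' i h]; exact hi, fun j hji => (hj j hji).trans (hj' j (hji.trans h))⟩
  · subst h; exact ⟨i, hi.trans hi', fun j hji => (hj j hji).trans (hj' j hji)⟩
  · exact ⟨i', by rw [hj i' h]; exact hi', fun j hji => (hj j (hji.trans h)).trans (hj' j hji)⟩

lemma idxLt_trichotomy (a b : Idx n) : idxLt a b ∨ a = b ∨ idxLt b a := by
  by_cases hab : a = b
  · exact Or.inr (Or.inl hab)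
  · have hne : ∃ i, a i ≠ b i := by
      by_contra h
      push_neg at h
      exact hab (funext h)
    classical
    have hS : (Finset.univ.filter (fun i => a i ≠ b i)).Nonempty := by
      obtain ⟨i, hi⟩ := hne
      exact ⟨i, by simp [hi]⟩
    set i₀ := (Finset.univ.filter (fun i => a i ≠ b i)).min' hS with hi₀
    have hmem : a i₀ ≠ b i₀ := by
      have := (Finset.univ.filter (fun i => a i ≠ b i)).min'_mem hS
      simpa using this
    have hagree : ∀ j, j < i₀ → a j = b j := by
      intro j hj
      by_contra hne'
      have : i₀ ≤ j := Finset.min'_le _ _ (by simp [hne'])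
      exact absurd hj (not_lt.mpr this)
    rcases lt_or_gt_of_ne hmem with h | h
    · exact Or.inl ⟨i₀, h, hagree⟩
    · exact Or.inr (Or.inr ⟨i₀, h, fun j hj => (hagree j hj).symm⟩)

/-- componentwise ≤ implies not idxLt backwards -/
lemma compLe_not_idxLt {a b : Idx n} (h : ∀ i, a i ≤ b i) : ¬ idxLt b a := by
  rintro ⟨i, hi, -⟩; exact absurd (h i) (not_le.mpr hi)

lemma compLe_idxLt {a b : Idx n} (h : ∀ i, a i ≤ b i) (hne : a ≠ b) : idxLt a b := by
  rcases idxLt_trichotomy a b with h' | h' | h'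
  · exact h'
  · exact absurd h' hne
  · exact absurd h' (compLe_not_idxLt h)

/-- existence of an idxLt-maximum in a nonempty finset -/
lemma exists_idxLt_max (S : Finset (Idx n)) (hS : S.Nonempty) :
    ∃ m ∈ S, ∀ x ∈ S, x = m ∨ idxLt x m := by
  classical
  induction S using Finset.induction_on with
  | empty => exact absurd hS (by simp)
  | @insert a S ha ih =>
    rcases S.eq_empty_or_nonempty with rfl | hS'
    · exact ⟨a, by simp, by simp⟩
    · obtain ⟨m, hm, hmax⟩ := ih hS'
      rcases idxLt_trichotomy a m with h | h | h
      · exact ⟨m, Finset.mem_insert_of_mem hm, by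
          intro x hx
          rcases Finset.mem_insert.mp hx with rfl | hx
          · exact Or.inr h
          · exact hmax x hx⟩
      · subst h; exact ⟨a, Finset.mem_insert_self _ _, by
          intro x hx
          rcases Finset.mem_insert.mp hx with rfl | hx
          · exact Or.inl rfl
          · exact hmax x hx⟩
      · refine ⟨a, Finset.mem_insert_self _ _, ?_⟩
        intro x hx
        rcases Finset.mem_insert.mp hx with rfl | hx
        · exact Or.inl rfl
        · rcases hmax x hx with rfl | hx'
          · exact Or.inr h
          · exact Or.inr (idxLt_trans hx' h)

lemma exists_idxLt_min (S : Finset (Idx n)) (hS : S.Nonempty) :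
    ∃ m ∈ S, ∀ x ∈ S, x = m ∨ idxLt m x := by
  classical
  induction S using Finset.induction_on with
  | empty => exact absurd hS (by simp)
  | @insert a S ha ih =>
    rcases S.eq_empty_or_nonempty with rfl | hS'
    · exact ⟨a, by simp, by simp⟩
    · obtain ⟨m, hm, hmin⟩ := ih hS'
      rcases idxLt_trichotomy a m with h | h | h
      · refine ⟨a, Finset.mem_insert_self _ _, ?_⟩
        intro x hx
        rcases Finset.mem_insert.mp hx with rfl | hx
        · exact Or.inl rfl
        · rcases hmin x hx with rfl | hx'
          · exact Or.inr h
          · exact Or.inr (idxLt_trans h hx')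
      · subst h; exact ⟨a, Finset.mem_insert_self _ _, by
          intro x hx
          rcases Finset.mem_insert.mp hx with rfl | hx
          · exact Or.inl rfl
          · exact hmin x hx⟩
      · exact ⟨m, Finset.mem_insert_of_mem hm, by
          intro x hx
          rcases Finset.mem_insert.mp hx with rfl | hx
          · exact Or.inr h
          · exact hmin x hx⟩

end Order

section Grevlex
variable {d : ℕ} {n : Fin d → ℕ}

lemma expDeg_add {σ : Type*} (α β : σ →₀ ℕ) : expDeg (α + β) = expDeg α + expDeg β := by
  unfold expDeg
  exact Finsupp.sum_add_index' (fun _ => rfl) (fun _ _ _ => rfl)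

lemma expDeg_single {σ : Type*} (a : σ) (k : ℕ) : expDeg (Finsupp.single a k) = k := by
  unfold expDeg
  exact Finsupp.sum_single_index rfl

lemma expDeg_zero {σ : Type*} : expDeg (0 : σ →₀ ℕ) = 0 := by
  unfold expDeg; simp

lemma apply_le_expDeg {σ : Type*} (α : σ →₀ ℕ) (a : σ) : α a ≤ expDeg α := by
  by_cases h : a ∈ α.support
  · exact Finset.single_le_sum (fun _ _ => Nat.zero_le _) h
  · simp [Finsupp.notMem_support_iff.mp h]

lemma grevlexLt_irrefl (α : Idx n →₀ ℕ) : ¬ grevlexLt α α := by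
  rintro (h | ⟨-, j, hj, -⟩)
  · exact lt_irrefl _ h
  · exact lt_irrefl _ hj

lemma grevlexLt_expDeg_le {α β : Idx n →₀ ℕ} (h : grevlexLt α β) : expDeg α ≤ expDeg β := by
  rcases h with h | ⟨h, -⟩
  · exact h.le
  · exact h.le

lemma grevlexLt_trans {α β γ : Idx n →₀ ℕ} (h1 : grevlexLt α β) (h2 : grevlexLt β γ) :
    grevlexLt α γ := by
  rcases h1 with h1 | ⟨e1, j1, hj1, ha1⟩
  · exact Or.inl (lt_of_lt_of_le h1 (grevlexLt_expDeg_le h2))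
  · rcases h2 with h2 | ⟨e2, j2, hj2, ha2⟩
    · exact Or.inl (e1 ▸ h2)
    · refine Or.inr ⟨e1.trans e2, ?_⟩
      rcases idxLt_trichotomy j1 j2 with h | h | h
      · refine ⟨j2, ?_, fun k hk => (ha1 k (idxLt_trans h hk)).trans (ha2 k hk)⟩
        rw [ha1 j2 h]; exact hj2
      · subst h
        exact ⟨j1, hj2.trans hj1, fun k hk => (ha1 k hk).trans (ha2 k hk)⟩
      · refine ⟨j1, ?_, fun k hk => (ha1 k hk).trans (ha2 k (idxLt_trans h hk))⟩
        rw [← ha2 j1 h]; exact hj1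

lemma grevlexLt_total {α β : Idx n →₀ ℕ} (h : α ≠ β) : grevlexLt α β ∨ grevlexLt β α := by
  rcases lt_trichotomy (expDeg α) (expDeg β) with hd | hd | hd
  · exact Or.inl (Or.inl hd)
  · classical
    have hne : ∃ a, α a ≠ β a := by
      by_contra hc; push_neg at hc
      exact h (Finsupp.ext hc)
    have hsub : {a : Idx n | α a ≠ β a} ⊆ ↑(α.support ∪ β.support) := by
      intro a ha
      simp only [Set.mem_setOf_eq] at ha
      simp only [Finset.coe_union, Set.mem_union, Finset.mem_coe,
        Finsupp.mem_support_iff]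
      by_contra hc; push_neg at hc
      exact ha (hc.1.trans hc.2.symm)
    set S : Finset (Idx n) := (α.support ∪ β.support).filter (fun a => α a ≠ β a) with hS
    have hSne : S.Nonempty := by
      obtain ⟨a, ha⟩ := hne
      exact ⟨a, Finset.mem_filter.mpr ⟨hsub ha, ha⟩⟩
    obtain ⟨j, hjS, hjmax⟩ := exists_idxLt_max S hSne
    have hjne : α j ≠ β j := (Finset.mem_filter.mp hjS).2
    have hagree : ∀ k, idxLt j k → α k = β k := by
      intro k hk
      by_contra hc
      rcases hjmax k (Finset.mem_filter.mpr ⟨hsub hc, hc⟩) with rfl | hk'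
      · exact idxLt_irrefl k hk
      · exact idxLt_asymm hk hk'
    rcases lt_or_gt_of_ne hjne with h' | h'
    · exact Or.inr (Or.inr ⟨hd.symm, j, h', fun k hk => (hagree k hk).symm⟩)
    · exact Or.inl (Or.inr ⟨hd, j, h', hagree⟩)
  · exact Or.inr (Or.inl hd)

lemma grevlexLt_asymm {α β : Idx n →₀ ℕ} (h : grevlexLt α β) : ¬ grevlexLt β α :=
  fun h' => grevlexLt_irrefl α (grevlexLt_trans h h')

lemma grevlexLt_add_right {α β : Idx n →₀ ℕ} (h : grevlexLt α β) (γ : Idx n →₀ ℕ) :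
    grevlexLt (α + γ) (β + γ) := by
  rcases h with h | ⟨he, j, hj, ha⟩
  · exact Or.inl (by rw [expDeg_add, expDeg_add]; omega)
  · refine Or.inr ⟨by rw [expDeg_add, expDeg_add, he], j, ?_, ?_⟩
    · simpa using hj
    · intro k hk
      simp only [Finsupp.add_apply]
      rw [ha k hk]

/-- grevlex-maximum of a nonempty finset -/
lemma exists_grevlex_max (S : Finset (Idx n →₀ ℕ)) (hS : S.Nonempty) :
    ∃ m ∈ S, ∀ x ∈ S, x = m ∨ grevlexLt x m := by
  classical
  induction S using Finset.induction_on with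
  | empty => exact absurd hS (by simp)
  | @insert a S ha ih =>
    rcases S.eq_empty_or_nonempty with rfl | hS'
    · exact ⟨a, by simp, by simp⟩
    · obtain ⟨m, hm, hmax⟩ := ih hS'
      by_cases hae : a = m
      · subst hae
        exact ⟨a, Finset.mem_insert_self _ _, by
          intro x hx
          rcases Finset.mem_insert.mp hx with rfl | hx
          · exact Or.inl rfl
          · exact hmax x hx⟩
      rcases grevlexLt_total hae with h | h
      · exact ⟨m, Finset.mem_insert_of_mem hm, by
          intro x hx
          rcases Finset.mem_insert.mp hx with rfl | hx
          · exact Or.inr h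
          · exact hmax x hx⟩
      · refine ⟨a, Finset.mem_insert_self _ _, ?_⟩
        intro x hx
        rcases Finset.mem_insert.mp hx with rfl | hx
        · exact Or.inl rfl
        · rcases hmax x hx with rfl | hx'
          · exact Or.inr h
          · exact Or.inr (grevlexLt_trans hx' h)

lemma finite_expDeg_le (D : ℕ) : {β : Idx n →₀ ℕ | expDeg β ≤ D}.Finite := by
  rw [← Set.finite_coe_iff]
  refine Finite.of_injective
    (fun (β : {β : Idx n →₀ ℕ // expDeg β ≤ D}) =>
      (fun a => (⟨β.1 a, lt_of_le_of_lt ((apply_le_expDeg β.1 a).trans β.2)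
        (Nat.lt_succ_self D)⟩ : Fin (D + 1)) : Idx n → Fin (D + 1))) ?_
  intro β1 β2 h
  ext a
  exact congrArg Fin.val (congrFun h a)

end Grevlex

section WF
variable {d : ℕ} {n : Fin d → ℕ}

lemma grevlexLt_wf : WellFounded (grevlexLt (d := d) (n := n)) := by
  have hfin : ∀ α : Idx n →₀ ℕ, {β | grevlexLt β α}.Finite := by
    intro α
    exact (finite_expDeg_le (expDeg α)).subset (fun β hβ => grevlexLt_expDeg_le hβ)
  have hmono : ∀ {α β : Idx n →₀ ℕ}, grevlexLt β α →
      {γ | grevlexLt γ β}.ncard < {γ | grevlexLt γ α}.ncard := by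
    intro α β h
    apply Set.ncard_lt_ncard _ (hfin α)
    constructor
    · intro γ hγ; exact grevlexLt_trans hγ h
    · intro hc
      exact grevlexLt_irrefl β (hc h)
  have : Subrelation (grevlexLt (d := d) (n := n))
      (InvImage (· < ·) (fun α => {γ | grevlexLt γ α}.ncard)) := fun h => hmono h
  exact this.wf (InvImage.wf _ (Nat.lt_wfRel.wf))

end WF

section Gens
variable {d : ℕ} {n : Fin d → ℕ}

/-- exponent vector of `X a ^ 2` -/
noncomputable def sqm (a : Idx n) : Idx n →₀ ℕ := Finsupp.single a 2

/-- exponent vector of `X a * X b` -/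
noncomputable def prm (a b : Idx n) : Idx n →₀ ℕ := Finsupp.single a 1 + Finsupp.single b 1

lemma fin_le_lastF {m : ℕ} [NeZero m] (x : Fin m) : x ≤ lastF m := by
  have := x.2
  simp only [lastF, Fin.le_def]
  omega

lemma prm_comm (a b : Idx n) : prm a b = prm b a := add_comm _ _

lemma ne_symm' {α : Sort*} {a b : α} (h : a ≠ b) : b ≠ a := fun e => h e.symm

lemma prm_apply (a b c : Idx n) :
    prm a b c = (if a = c then 1 else 0) + (if b = c then 1 else 0) := by
  simp [prm, Finsupp.single_apply]

lemma prm_apply_left {a b : Idx n} (hab : a ≠ b) : prm a b a = 1 := by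
  rw [prm_apply]; simp [hab, ne_symm' hab]

lemma prm_apply_right {a b : Idx n} (hab : a ≠ b) : prm a b b = 1 := by
  rw [prm_apply]; simp [hab, ne_symm' hab]

lemma prm_apply_ne {a b c : Idx n} (ha : a ≠ c) (hb : b ≠ c) : prm a b c = 0 := by
  rw [prm_apply]; simp [ha, hb]

lemma prm_apply_le_one {a b : Idx n} (hab : a ≠ b) (c : Idx n) : prm a b c ≤ 1 := by
  rw [prm_apply]
  by_cases h1 : a = c <;> by_cases h2 : b = c <;> simp_all

lemma prm_ne_zero_iff {a b c : Idx n} : prm a b c ≠ 0 ↔ a = c ∨ b = c := by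
  rw [prm_apply]
  by_cases h1 : a = c <;> by_cases h2 : b = c <;> simp_all

lemma expDeg_prm (a b : Idx n) : expDeg (prm a b) = 2 := by
  rw [prm, expDeg_add, expDeg_single, expDeg_single]

lemma expDeg_sqm (a : Idx n) : expDeg (sqm a) = 2 := expDeg_single a 2

lemma sqm_apply (a c : Idx n) : sqm a c = if a = c then 2 else 0 := Finsupp.single_apply

lemma X_mul_X (a b : Idx n) :
    (X a * X b : MvPolynomial (Idx n) ℝ) = monomial (prm a b) 1 := by
  rw [X, X, monomial_mul, mul_one]; rfl

lemma X_sq (a : Idx n) :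
    (X a ^ 2 - 1 : MvPolynomial (Idx n) ℝ) = monomial (sqm a) 1 - monomial 0 1 := by
  rw [X_pow_eq_monomial, ← C_1, C_apply]; rfl

/-- coefficients and support of a difference of two distinct monomials -/
lemma binom_coeff {u v : Idx n →₀ ℕ} (huv : u ≠ v) (w : Idx n →₀ ℕ) :
    coeff w ((monomial u 1 - monomial v 1 : MvPolynomial (Idx n) ℝ)) =
      (if u = w then 1 else 0) - (if v = w then 1 else 0) := by
  rw [coeff_sub, coeff_monomial, coeff_monomial]

lemma binom_support {u v : Idx n →₀ ℕ} (huv : u ≠ v) :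
    ((monomial u 1 - monomial v 1 : MvPolynomial (Idx n) ℝ)).support = {u, v} := by
  ext w
  rw [mem_support_iff, binom_coeff huv]
  by_cases h1 : u = w <;> by_cases h2 : v = w <;>
    simp_all [eq_comm]

end Gens

section Lead
variable {d : ℕ} {n : Fin d → ℕ} [∀ i, NeZero (n i)]

lemma sqm_ne_zero (a : Idx n) : sqm a ≠ 0 := by
  intro h
  have : sqm a a = 0 := by rw [h]; rfl
  simp [sqm_apply] at this

lemma sq_support (a : Idx n) :
    (X a ^ 2 - 1 : MvPolynomial (Idx n) ℝ).support = {sqm a, 0} := by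
  rw [X_sq]; exact binom_support (sqm_ne_zero a)

lemma sq_isLeadMon (a : Idx n) :
    IsLeadMon (X a ^ 2 - 1 : MvPolynomial (Idx n) ℝ) (sqm a) := by
  constructor
  · rw [sq_support]; simp
  · intro m' hm' hne
    rw [sq_support] at hm'
    rcases Finset.mem_insert.mp hm' with rfl | hm'
    · exact absurd rfl hne
    · rw [Finset.mem_singleton.mp hm']
      exact Or.inl (by rw [expDeg_zero, expDeg_sqm]; omega)

lemma sq_leadMon_unique {a : Idx n} {m : Idx n →₀ ℕ}
    (h : IsLeadMon (X a ^ 2 - 1 : MvPolynomial (Idx n) ℝ) m) : m = sqm a := by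
  obtain ⟨hmem, hmax⟩ := h
  rw [sq_support] at hmem
  rcases Finset.mem_insert.mp hmem with rfl | hmem
  · rfl
  · rw [Finset.mem_singleton.mp hmem] at hmax ⊢
    have := hmax (sqm a) (by rw [sq_support]; simp) (sqm_ne_zero a)
    have hle := grevlexLt_expDeg_le this
    rw [expDeg_zero, expDeg_sqm] at hle
    omega

lemma sq_coeff_lead (a : Idx n) :
    coeff (sqm a) (X a ^ 2 - 1 : MvPolynomial (Idx n) ℝ) = 1 := by
  rw [X_sq, binom_coeff (sqm_ne_zero a)]
  simp [ne_symm' (sqm_ne_zero a), sqm_ne_zero a]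

-- componentwise comparisons for bmin/bmax
lemma le_bmax_left (a b : Idx n) (i : Fin d) : a i ≤ bmax a b i := by
  unfold bmax
  split_ifs with h
  · exact fin_le_lastF _
  · exact le_max_left _ _

lemma le_bmax_right (a b : Idx n) (i : Fin d) : b i ≤ bmax a b i := by
  unfold bmax
  split_ifs with h
  · rw [← h]; exact fin_le_lastF _
  · exact le_max_right _ _

lemma bmin_le_bmax (a b : Idx n) (i : Fin d) : bmin a b i ≤ bmax a b i := by
  unfold bmin bmax
  split_ifs with h
  · exact le_refl _
  · exact min_le_max

lemma bmin_ne_bmax {a b : Idx n} (hne : a ≠ b) : bmin a b ≠ bmax a b := by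
  have : ∃ i, a i ≠ b i := by
    by_contra h; push_neg at h; exact hne (funext h)
  obtain ⟨i, hi⟩ := this
  intro h
  have := congrFun h i
  unfold bmin bmax at this
  rw [if_neg hi, if_neg hi] at this
  exact absurd this (ne_of_lt (min_lt_max.mpr hi))

lemma bmax_ne_left {a b : Idx n} (hab : idxLt a b) : bmax a b ≠ a := by
  obtain ⟨i, hi, -⟩ := hab
  intro h
  have := congrFun h i
  unfold bmax at this
  rw [if_neg (ne_of_lt hi)] at this
  rw [max_eq_right hi.le] at this
  exact absurd this (ne_of_gt hi)

lemma bmax_ne_right {a b : Idx n} (hC : ∃ i, b i < a i ∨ (a i = b i ∧ a i < lastF (n i))) :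
    bmax a b ≠ b := by
  obtain ⟨i, hi⟩ := hC
  intro h
  have hh := congrFun h i
  unfold bmax at hh
  rcases hi with hi | ⟨hi, hlt⟩
  · rw [if_neg (ne_of_gt hi), max_eq_left hi.le] at hh
    exact absurd hh (ne_of_gt hi)
  · rw [if_pos hi] at hh
    rw [← hi] at hh
    exact absurd hh.symm (ne_of_lt hlt)

end Lead

section Lead2
variable {d : ℕ} {n : Fin d → ℕ} [∀ i, NeZero (n i)]
variable {a b : Idx n}

lemma bin_eq (a b : Idx n) :
    (X a * X b - X (bmin a b) * X (bmax a b) : MvPolynomial (Idx n) ℝ) =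
      monomial (prm a b) 1 - monomial (prm (bmin a b) (bmax a b)) 1 := by
  rw [X_mul_X, X_mul_X]

lemma bmax_not_ab (hab : idxLt a b)
    (hC : ∃ i, b i < a i ∨ (a i = b i ∧ a i < lastF (n i))) :
    prm a b (bmax a b) = 0 :=
  prm_apply_ne (ne_symm' (bmax_ne_left hab)) (ne_symm' (bmax_ne_right hC))

lemma bin_prm_grevlex (hab : idxLt a b)
    (hC : ∃ i, b i < a i ∨ (a i = b i ∧ a i < lastF (n i))) :
    grevlexLt (prm (bmin a b) (bmax a b)) (prm a b) := by
  have hne : a ≠ b := idxLt_ne hab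
  refine Or.inr ⟨by rw [expDeg_prm, expDeg_prm], bmax a b, ?_, ?_⟩
  · rw [bmax_not_ab hab hC, prm_apply_right (bmin_ne_bmax hne)]
    omega
  · intro k hk
    have hka : k ≠ a := fun h => compLe_not_idxLt (le_bmax_left a b) (h ▸ hk)
    have hkb : k ≠ b := fun h => compLe_not_idxLt (le_bmax_right a b) (h ▸ hk)
    have hkm : k ≠ bmin a b := fun h => compLe_not_idxLt (bmin_le_bmax a b) (h ▸ hk)
    have hkM : k ≠ bmax a b := ne_symm' (idxLt_ne hk)
    rw [prm_apply_ne (ne_symm' hka) (ne_symm' hkb),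
      prm_apply_ne (ne_symm' hkm) (ne_symm' hkM)]

lemma bin_prm_ne (hab : idxLt a b)
    (hC : ∃ i, b i < a i ∧ True ∨ (a i = b i ∧ a i < lastF (n i))) : True := trivial

lemma bin_prm_ne' (hab : idxLt a b)
    (hC : ∃ i, b i < a i ∨ (a i = b i ∧ a i < lastF (n i))) :
    prm a b ≠ prm (bmin a b) (bmax a b) := by
  intro h
  have h1 := bmax_not_ab hab hC
  rw [h, prm_apply_right (bmin_ne_bmax (idxLt_ne hab))] at h1
  exact one_ne_zero h1

lemma bin_support (hab : idxLt a b)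
    (hC : ∃ i, b i < a i ∨ (a i = b i ∧ a i < lastF (n i))) :
    (X a * X b - X (bmin a b) * X (bmax a b) : MvPolynomial (Idx n) ℝ).support =
      {prm a b, prm (bmin a b) (bmax a b)} := by
  rw [bin_eq]; exact binom_support (bin_prm_ne' hab hC)

lemma bin_isLeadMon (hab : idxLt a b)
    (hC : ∃ i, b i < a i ∨ (a i = b i ∧ a i < lastF (n i))) :
    IsLeadMon (X a * X b - X (bmin a b) * X (bmax a b) : MvPolynomial (Idx n) ℝ)
      (prm a b) := by
  constructor
  · rw [bin_support hab hC]; simp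
  · intro m' hm' hne
    rw [bin_support hab hC] at hm'
    rcases Finset.mem_insert.mp hm' with rfl | hm'
    · exact absurd rfl hne
    · rw [Finset.mem_singleton.mp hm']
      exact bin_prm_grevlex hab hC

lemma bin_leadMon_unique (hab : idxLt a b)
    (hC : ∃ i, b i < a i ∨ (a i = b i ∧ a i < lastF (n i))) {m : Idx n →₀ ℕ}
    (h : IsLeadMon (X a * X b - X (bmin a b) * X (bmax a b) : MvPolynomial (Idx n) ℝ) m) :
    m = prm a b := by
  obtain ⟨hmem, hmax⟩ := h
  rw [bin_support hab hC] at hmem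
  rcases Finset.mem_insert.mp hmem with rfl | hmem
  · rfl
  · rw [Finset.mem_singleton.mp hmem] at hmax ⊢
    have := hmax (prm a b) (by rw [bin_support hab hC]; simp) (bin_prm_ne' hab hC)
    exact absurd this (grevlexLt_asymm (bin_prm_grevlex hab hC))

lemma bin_coeff_lead (hab : idxLt a b)
    (hC : ∃ i, b i < a i ∨ (a i = b i ∧ a i < lastF (n i))) :
    coeff (prm a b) (X a * X b - X (bmin a b) * X (bmax a b) : MvPolynomial (Idx n) ℝ)
      = 1 := by
  rw [bin_eq, binom_coeff (bin_prm_ne' hab hC)]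
  simp [ne_symm' (bin_prm_ne' hab hC)]

end Lead2

section Std
variable {d : ℕ} {n : Fin d → ℕ} [∀ i, NeZero (n i)]

/-- standard (non-divisible) monomials -/
def StdMon (m : Idx n →₀ ℕ) : Prop :=
  (∀ a, m a ≤ 1) ∧ ∀ a b, m a ≠ 0 → m b ≠ 0 → idxLt a b →
    ∀ i, a i ≤ b i ∧ (a i = b i → a i = lastF (n i))

lemma not_stdMon_exists {m : Idx n →₀ ℕ} (h : ¬ StdMon m) :
    ∃ g ∈ Ginf n, ∃ mg, IsLeadMon g mg ∧ mg ≤ m := by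
  by_cases h1 : ∀ a, m a ≤ 1
  · have h2 : ¬ ∀ a b, m a ≠ 0 → m b ≠ 0 → idxLt a b →
        ∀ i, a i ≤ b i ∧ (a i = b i → a i = lastF (n i)) := fun hc => h ⟨h1, hc⟩
    push_neg at h2
    obtain ⟨a, b, ha, hb, hab, i, hi⟩ := h2
    have hC : ∃ i, b i < a i ∨ (a i = b i ∧ a i < lastF (n i)) := by
      refine ⟨i, ?_⟩
      by_cases hle : a i ≤ b i
      · obtain ⟨he, hne⟩ := hi hle
        exact Or.inr ⟨he, lt_of_le_of_ne (fin_le_lastF _) hne⟩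
      · exact Or.inl (not_le.mp hle)
    refine ⟨X a * X b - X (bmin a b) * X (bmax a b), Or.inr ⟨a, b, hab, hC, rfl⟩,
      prm a b, bin_isLeadMon hab hC, ?_⟩
    rw [Finsupp.le_def]
    intro c
    rw [prm_apply]
    by_cases hac : a = c
    · subst hac
      rw [if_pos rfl, if_neg (fun h' => (idxLt_ne hab) h'.symm)]
      omega
    · rw [if_neg hac]
      by_cases hbc : b = c
      · subst hbc; rw [if_pos rfl]; omega
      · rw [if_neg hbc]; omega
  · push_neg at h1
    obtain ⟨a, ha⟩ := h1
    refine ⟨X a ^ 2 - 1, Or.inl ⟨a, rfl⟩, sqm a, sq_isLeadMon a, ?_⟩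
    rw [Finsupp.le_def]
    intro c
    rw [sqm_apply]
    split_ifs with hc
    · subst hc; omega
    · omega

lemma Ginf_monic {g : MvPolynomial (Idx n) ℝ} (hg : g ∈ Ginf n) {L : Idx n →₀ ℕ}
    (hL : IsLeadMon g L) : coeff L g = 1 := by
  rcases hg with ⟨a, rfl⟩ | ⟨a, b, hab, hC, rfl⟩
  · rw [sq_leadMon_unique hL]; exact sq_coeff_lead a
  · rw [bin_leadMon_unique hab hC hL]; exact bin_coeff_lead hab hC

end Std

section IndexId
variable {d : ℕ} {n : Fin d → ℕ} [∀ i, NeZero (n i)]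

lemma bmin_comm (a b : Idx n) : bmin a b = bmin b a := by
  funext i
  unfold bmin
  by_cases h : a i = b i
  · rw [if_pos h, if_pos h.symm]
  · rw [if_neg h, if_neg (fun h' => h h'.symm), min_comm]

lemma bmax_comm (a b : Idx n) : bmax a b = bmax b a := by
  funext i
  unfold bmax
  by_cases h : a i = b i
  · rw [if_pos h, if_pos h.symm]
  · rw [if_neg h, if_neg (fun h' => h h'.symm), max_comm]

lemma bmin_diag (a : Idx n) : bmin a a = fun i => lastF (n i) := by
  funext i; unfold bmin; rw [if_pos rfl]

lemma bmax_diag (a : Idx n) : bmax a a = fun i => lastF (n i) := by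
  funext i; unfold bmax; rw [if_pos rfl]

lemma bbar_of_comp {c e : Idx n} (hce : ∀ i, c i ≤ e i)
    (hlast : ∀ i, c i = e i → c i = lastF (n i)) :
    bmin c e = c ∧ bmax c e = e := by
  constructor <;> funext i
  · unfold bmin
    by_cases h : c i = e i
    · rw [if_pos h, ← hlast i h]
    · rw [if_neg h, min_eq_left (hce i)]
  · unfold bmax
    by_cases h : c i = e i
    · rw [if_pos h, ← h, ← hlast i h]
    · rw [if_neg h, max_eq_right (hce i)]

lemma bbar_amin (a b : Idx n) : bmin (amin a b) (amax a b) = bmin a b := by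
  funext i
  unfold bmin amin amax
  by_cases h : a i = b i
  · rw [if_pos (by rw [h, min_self, max_self]), if_pos h]
  · rw [if_neg (ne_of_lt (min_lt_max.mpr h)), if_neg h, min_eq_left min_le_max]

lemma bbar_amax (a b : Idx n) : bmax (amin a b) (amax a b) = bmax a b := by
  funext i
  unfold bmax amin amax
  by_cases h : a i = b i
  · rw [if_pos (by rw [h, min_self, max_self]), if_pos h]
  · rw [if_neg (ne_of_lt (min_lt_max.mpr h)), if_neg h, max_eq_right min_le_max]

lemma amin_update {c e : Idx n} (hce : ∀ i, c i ≤ e i) {i : Fin d} (hi : c i = e i) :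
    amin (Function.update c i (lastF (n i))) e = c := by
  funext j
  unfold amin
  by_cases hj : j = i
  · subst hj
    rw [Function.update_self, min_eq_right (fin_le_lastF _), ← hi]
  · rw [Function.update_of_ne hj, min_eq_left (hce j)]

lemma amax_update {c e : Idx n} (hce : ∀ i, c i ≤ e i) {i : Fin d} (hi : c i = e i) :
    amax (Function.update c i (lastF (n i))) e = Function.update e i (lastF (n i)) := by
  funext j
  unfold amax
  by_cases hj : j = i
  · subst hj
    rw [Function.update_self, Function.update_self, max_eq_left (fin_le_lastF _)]
  · rw [Function.update_of_ne hj, Function.update_of_ne hj, max_eq_right (hce j)]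

lemma bmin_update {c e : Idx n} {i : Fin d} (hi : c i = e i) :
    bmin (Function.update c i (lastF (n i))) (Function.update e i (lastF (n i))) =
      bmin c e := by
  funext j
  unfold bmin
  by_cases hj : j = i
  · subst hj
    rw [Function.update_self, Function.update_self, if_pos rfl, if_pos hi]
  · rw [Function.update_of_ne hj, Function.update_of_ne hj]

lemma bmax_update {c e : Idx n} {i : Fin d} (hi : c i = e i) :
    bmax (Function.update c i (lastF (n i))) (Function.update e i (lastF (n i))) =
      bmax c e := by
  funext j
  unfold bmax
  by_cases hj : j = i
  · subst hj
    rw [Function.update_self, Function.update_self, if_pos rfl, if_pos hi]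
  · rw [Function.update_of_ne hj, Function.update_of_ne hj]

end IndexId

section Srel
variable {d : ℕ} {n : Fin d → ℕ} [∀ i, NeZero (n i)]
variable {R : Type*} [CommRing R] (s : Idx n → R)

lemma srel_inner (hsq : ∀ a, s a ^ 2 = 1)
    (hrk : ∀ a b, s a * s b = s (amin a b) * s (amax a b)) :
    ∀ (k : ℕ) (c e : Idx n), (∀ i, c i ≤ e i) →
      (Finset.univ.filter (fun i => c i = e i ∧ c i ≠ lastF (n i))).card = k →
      s c * s e = s (bmin c e) * s (bmax c e) := by
  intro k
  induction k using Nat.strong_induction_on with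
  | _ k ih =>
    intro c e hce hcard
    rcases (Finset.univ.filter
        (fun i => c i = e i ∧ c i ≠ lastF (n i))).eq_empty_or_nonempty with hE | ⟨i, hi⟩
    · have hlast : ∀ i, c i = e i → c i = lastF (n i) := by
        intro i hi
        by_contra hne
        have : i ∈ Finset.univ.filter (fun i => c i = e i ∧ c i ≠ lastF (n i)) := by
          simp only [Finset.mem_filter, Finset.mem_univ, true_and]
          exact ⟨hi, hne⟩
        rw [hE] at this
        exact absurd this (Finset.notMem_empty i)
      obtain ⟨h1, h2⟩ := bbar_of_comp hce hlast
      rw [h1, h2]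
    · obtain ⟨hieq, hine⟩ := (Finset.mem_filter.mp hi).2
      set c' := Function.update c i (lastF (n i)) with hc'
      set e' := Function.update e i (lastF (n i)) with he'
      have hB : s c' * s e = s c * s e' := by
        have := hrk c' e
        rw [amin_update hce hieq, amax_update hce hieq] at this
        exact this
      have hkey : s c * s e = s c' * s e' := by
        have h2 := hsq e
        have h3 := hsq e'
        linear_combination (-(s e * s e')) * hB + s c' * s e' * h2 - s c * s e * h3
      have hce' : ∀ j, c' j ≤ e' j := by
        intro j
        rw [hc', he']
        by_cases hj : j = i
        · subst hj; rw [Function.update_self, Function.update_self]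
        · rw [Function.update_of_ne hj, Function.update_of_ne hj]; exact hce j
      have hEset : Finset.univ.filter (fun j => c' j = e' j ∧ c' j ≠ lastF (n j)) =
          (Finset.univ.filter (fun j => c j = e j ∧ c j ≠ lastF (n j))).erase i := by
        ext j
        rw [hc', he']
        simp only [Finset.mem_filter, Finset.mem_erase, Finset.mem_univ, true_and]
        by_cases hj : j = i
        · subst hj
          simp [Function.update_self]
        · rw [Function.update_of_ne hj, Function.update_of_ne hj]
          simp [hj]
      have hlt : (Finset.univ.filter
          (fun j => c' j = e' j ∧ c' j ≠ lastF (n j))).card < k := by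
        rw [hEset, ← hcard]
        exact Finset.card_erase_lt_of_mem hi
      have := ih _ hlt c' e' hce' rfl
      rw [hkey, this, bmin_update hieq, bmax_update hieq]

lemma srel_bbar (hsq : ∀ a, s a ^ 2 = 1)
    (hrk : ∀ a b, s a * s b = s (amin a b) * s (amax a b)) (a b : Idx n) :
    s a * s b = s (bmin a b) * s (bmax a b) := by
  rw [hrk a b]
  have := srel_inner s hsq hrk _ (amin a b) (amax a b) (fun i => min_le_max) rfl
  rw [this, bbar_amin, bbar_amax]

lemma srel_rk (hsq : ∀ a, s a ^ 2 = 1)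
    (hbb : ∀ a b, s a * s b = s (bmin a b) * s (bmax a b)) (a b : Idx n) :
    s a * s b = s (amin a b) * s (amax a b) := by
  rw [hbb a b]
  have := hbb (amin a b) (amax a b)
  rw [bbar_amin, bbar_amax] at this
  rw [← this]

lemma srel_bbar_of_gen (hsq : ∀ a, s a ^ 2 = 1)
    (hgen : ∀ a b, idxLt a b → (∃ i, b i < a i ∨ (a i = b i ∧ a i < lastF (n i))) →
      s a * s b = s (bmin a b) * s (bmax a b)) (a b : Idx n) :
    s a * s b = s (bmin a b) * s (bmax a b) := by
  have key : ∀ a b : Idx n, idxLt a b → s a * s b = s (bmin a b) * s (bmax a b) := by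
    intro a b hab
    by_cases hC : ∃ i, b i < a i ∨ (a i = b i ∧ a i < lastF (n i))
    · exact hgen a b hab hC
    · push_neg at hC
      have hce : ∀ i, a i ≤ b i := by
        intro i
        have := hC i
        rcases le_or_gt (a i) (b i) with h | h
        · exact h
        · exact absurd h (by simpa using this.1)
      have hlast : ∀ i, a i = b i → a i = lastF (n i) := by
        intro i hi
        have := (hC i).2 hi
        exact le_antisymm (fin_le_lastF _) (not_lt.mp (by simpa using this))
      obtain ⟨h1, h2⟩ := bbar_of_comp hce hlast
      rw [h1, h2]
  rcases idxLt_trichotomy a b with h | rfl | h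
  · exact key a b h
  · rw [bmin_diag, bmax_diag, ← pow_two, ← pow_two, hsq, hsq]
  · rw [mul_comm, bmin_comm, bmax_comm]
    exact key b a h

end Srel

section SpanEq
variable {d : ℕ} {n : Fin d → ℕ} [∀ i, NeZero (n i)]

private noncomputable def mkX (I : Ideal (MvPolynomial (Idx n) ℝ)) : Idx n → (MvPolynomial (Idx n) ℝ ⧸ I) :=
  fun a => Ideal.Quotient.mk I (X a)

lemma mkX_sq {I : Ideal (MvPolynomial (Idx n) ℝ)}
    (h : ∀ a : Idx n, (X a ^ 2 - 1 : MvPolynomial (Idx n) ℝ) ∈ I) (a : Idx n) :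
    mkX I a ^ 2 = 1 := by
  have := Ideal.Quotient.eq_zero_iff_mem.mpr (h a)
  rw [map_sub, map_pow, map_one, sub_eq_zero] at this
  exact this

lemma binrel_of_mem {I : Ideal (MvPolynomial (Idx n) ℝ)} {a b a' b' : Idx n}
    (h : (X a * X b - X a' * X b' : MvPolynomial (Idx n) ℝ) ∈ I) :
    mkX I a * mkX I b = mkX I a' * mkX I b' := by
  have := Ideal.Quotient.eq_zero_iff_mem.mpr h
  rw [map_sub, map_mul, map_mul, sub_eq_zero] at this
  exact this

lemma mem_of_binrel {I : Ideal (MvPolynomial (Idx n) ℝ)} {a b a' b' : Idx n}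
    (h : mkX I a * mkX I b = mkX I a' * mkX I b') :
    (X a * X b - X a' * X b' : MvPolynomial (Idx n) ℝ) ∈ I := by
  rw [← Ideal.Quotient.eq_zero_iff_mem, map_sub, map_mul, map_mul, sub_eq_zero]
  exact h

lemma sq_mem_Iinf (a : Idx n) : (X a ^ 2 - 1 : MvPolynomial (Idx n) ℝ) ∈ Iinf n :=
  Ideal.subset_span (Or.inl ⟨a, rfl⟩)

lemma rk1_mem_Iinf (a b : Idx n) :
    (X a * X b - X (amin a b) * X (amax a b) : MvPolynomial (Idx n) ℝ) ∈ Iinf n :=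
  Ideal.subset_span (Or.inr ⟨a, b, rfl⟩)

lemma sq_mem_spanGinf (a : Idx n) :
    (X a ^ 2 - 1 : MvPolynomial (Idx n) ℝ) ∈ Ideal.span (Ginf n) :=
  Ideal.subset_span (Or.inl ⟨a, rfl⟩)

lemma bbar_mem_Iinf (a b : Idx n) :
    (X a * X b - X (bmin a b) * X (bmax a b) : MvPolynomial (Idx n) ℝ) ∈ Iinf n := by
  apply mem_of_binrel
  exact srel_bbar (mkX (Iinf n)) (mkX_sq sq_mem_Iinf)
    (fun a b => binrel_of_mem (rk1_mem_Iinf a b)) a b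

lemma bbar_mem_spanGinf (a b : Idx n) :
    (X a * X b - X (bmin a b) * X (bmax a b) : MvPolynomial (Idx n) ℝ) ∈
      Ideal.span (Ginf n) := by
  apply mem_of_binrel
  refine srel_bbar_of_gen (mkX _) (mkX_sq sq_mem_spanGinf) ?_ a b
  intro a b hab hC
  exact binrel_of_mem (Ideal.subset_span (Or.inr ⟨a, b, hab, hC, rfl⟩))

lemma rk1_mem_spanGinf (a b : Idx n) :
    (X a * X b - X (amin a b) * X (amax a b) : MvPolynomial (Idx n) ℝ) ∈
      Ideal.span (Ginf n) := by
  apply mem_of_binrel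
  exact srel_rk (mkX _) (mkX_sq sq_mem_spanGinf)
    (fun a b => binrel_of_mem (bbar_mem_spanGinf a b)) a b

lemma span_Ginf_eq_Iinf : Ideal.span (Ginf n) = Iinf n := by
  apply le_antisymm
  · rw [Ideal.span_le]
    rintro g (⟨a, rfl⟩ | ⟨a, b, hab, hC, rfl⟩)
    · exact sq_mem_Iinf a
    · exact bbar_mem_Iinf a b
  · rw [Iinf, Ideal.span_le]
    rintro g (⟨a, rfl⟩ | ⟨a, b, rfl⟩)
    · exact sq_mem_spanGinf a
    · exact rk1_mem_spanGinf a b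

end SpanEq

section Reduce
variable {d : ℕ} {n : Fin d → ℕ} [∀ i, NeZero (n i)]

/-- support of `monomial γ c * g` consists of translates of monomials of `g` -/
lemma mem_support_monomial_mul {γ m' : Idx n →₀ ℕ} {c : ℝ} {g : MvPolynomial (Idx n) ℝ}
    (h : coeff m' (monomial γ c * g) ≠ 0) : ∃ m'' ∈ g.support, m' = γ + m'' := by
  rw [coeff_monomial_mul'] at h
  split_ifs at h with hle
  · refine ⟨m' - γ, ?_, ?_⟩
    · rw [mem_support_iff]
      intro hc
      rw [hc, mul_zero] at h
      exact h rfl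
    · rw [add_tsub_cancel_of_le hle]
  · exact absurd rfl h

lemma reduce_aux (μ : Idx n →₀ ℕ) :
    ∀ f : MvPolynomial (Idx n) ℝ,
      (∀ m' ∈ f.support, ¬ StdMon m' → (grevlexLt m' μ ∨ m' = μ)) →
      ∃ r, f - r ∈ Ideal.span (Ginf n) ∧ (∀ m' ∈ r.support, StdMon m') ∧
        (∀ ν, ¬(grevlexLt ν μ ∨ ν = μ) → coeff ν r = coeff ν f) := by
  induction μ using grevlexLt_wf.induction with
  | _ μ ih =>
    intro f hf
    classical
    by_cases hstd : ∀ m' ∈ f.support, StdMon m'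
    · exact ⟨f, by rw [sub_self]; exact Ideal.zero_mem _, hstd, fun ν _ => rfl⟩
    · push_neg at hstd
      set NS := f.support.filter (fun m => ¬ StdMon m) with hNS
      have hNSne : NS.Nonempty := by
        obtain ⟨m, hm, hnstd⟩ := hstd
        exact ⟨m, Finset.mem_filter.mpr ⟨hm, hnstd⟩⟩
      obtain ⟨m₀, hm₀NS, hm₀max⟩ := exists_grevlex_max NS hNSne
      have hm₀f : m₀ ∈ f.support := (Finset.mem_filter.mp hm₀NS).1
      have hm₀nstd : ¬ StdMon m₀ := (Finset.mem_filter.mp hm₀NS).2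
      have hm₀μ : grevlexLt m₀ μ ∨ m₀ = μ := hf m₀ hm₀f hm₀nstd
      obtain ⟨g, hg, L, hLlead, hLle⟩ := not_stdMon_exists hm₀nstd
      have hgL1 : coeff L g = 1 := Ginf_monic hg hLlead
      set γ : Idx n →₀ ℕ := m₀ - L with hγdef
      have hγL : γ + L = m₀ := by
        rw [hγdef, add_comm, add_tsub_cancel_of_le hLle]
      set c : ℝ := coeff m₀ f with hc
      set q : MvPolynomial (Idx n) ℝ := monomial γ c * g with hq
      have hqspan : q ∈ Ideal.span (Ginf n) :=
        Ideal.mul_mem_left _ _ (Ideal.subset_span hg)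
      have hqtouch : ∀ ν, coeff ν q ≠ 0 → (grevlexLt ν m₀ ∨ ν = m₀) := by
        intro ν hν
        obtain ⟨m'', hm'', rfl⟩ := mem_support_monomial_mul hν
        by_cases he : m'' = L
        · subst he; exact Or.inr hγL
        · left
          have := hLlead.2 m'' hm'' he
          have h2 := grevlexLt_add_right this γ
          rw [add_comm m'' γ, add_comm L γ] at h2
          rw [← hγL]
          exact h2
      have hcoeffm₀ : coeff m₀ q = c := by
        rw [hq, ← hγL, coeff_monomial_mul, hgL1, mul_one]
      set f' : MvPolynomial (Idx n) ℝ := f - q with hf'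
      have hf'coeff : ∀ ν, coeff ν f' = coeff ν f - coeff ν q := fun ν => by rw [hf', coeff_sub]
      have hnewlt : ∀ m' ∈ f'.support, ¬ StdMon m' → grevlexLt m' m₀ := by
        intro m' hm' hnstd
        have hne : m' ≠ m₀ := by
          intro h
          rw [mem_support_iff, h, hf'coeff, hcoeffm₀, sub_self] at hm'
          exact hm' rfl
        have hcoeff : coeff m' f' ≠ 0 := mem_support_iff.mp hm'
        rw [hf'coeff] at hcoeff
        by_cases hmf : m' ∈ f.support
        · rcases hm₀max m' (Finset.mem_filter.mpr ⟨hmf, hnstd⟩) with h | h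
          · exact absurd h hne
          · exact h
        · have : coeff m' q ≠ 0 := by
            rw [notMem_support_iff.mp hmf, zero_sub, neg_ne_zero] at hcoeff
            exact hcoeff
          rcases hqtouch m' this with h | h
          · exact h
          · exact absurd h hne
      by_cases hstd' : ∀ m' ∈ f'.support, StdMon m'
      · refine ⟨f', by rw [hf', sub_sub_cancel]; exact hqspan, hstd', ?_⟩
        intro ν hν
        rw [hf'coeff]
        have : coeff ν q = 0 := by
          by_contra hc'
          rcases hqtouch ν hc' with h | h
          · rcases hm₀μ with h' | h'
            · exact hν (Or.inl (grevlexLt_trans h h'))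
            · exact hν (Or.inl (h' ▸ h))
          · rcases hm₀μ with h' | h'
            · exact hν (Or.inl (h ▸ h'))
            · exact hν (Or.inr (h.trans h'))
        rw [this, sub_zero]
      · push_neg at hstd'
        set NS' := f'.support.filter (fun m => ¬ StdMon m) with hNS'
        have hNS'ne : NS'.Nonempty := by
          obtain ⟨m, hm, hnstd⟩ := hstd'
          exact ⟨m, Finset.mem_filter.mpr ⟨hm, hnstd⟩⟩
        obtain ⟨m₁, hm₁NS, hm₁max⟩ := exists_grevlex_max NS' hNS'ne
        have hm₁lt : grevlexLt m₁ m₀ :=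
          hnewlt m₁ (Finset.mem_filter.mp hm₁NS).1 (Finset.mem_filter.mp hm₁NS).2
        have hm₁μ : grevlexLt m₁ μ := by
          rcases hm₀μ with h | h
          · exact grevlexLt_trans hm₁lt h
          · exact h ▸ hm₁lt
        obtain ⟨r, hrspan, hrstd, hrcoeff⟩ := ih m₁ hm₁μ f' (by
          intro m' hm' hnstd
          rcases hm₁max m' (Finset.mem_filter.mpr ⟨hm', hnstd⟩) with h | h
          · exact Or.inr h
          · exact Or.inl h)
        refine ⟨r, ?_, hrstd, ?_⟩
        · have : f - r = q + (f' - r) := by rw [hf']; ring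
          rw [this]
          exact Ideal.add_mem _ hqspan hrspan
        · intro ν hν
          have hν₁ : ¬(grevlexLt ν m₁ ∨ ν = m₁) := by
            rintro (h | rfl)
            · exact hν (Or.inl (grevlexLt_trans h hm₁μ))
            · exact hν (Or.inl hm₁μ)
          rw [hrcoeff ν hν₁, hf'coeff]
          have : coeff ν q = 0 := by
            by_contra hc'
            rcases hqtouch ν hc' with h | h
            · rcases hm₀μ with h' | h'
              · exact hν (Or.inl (grevlexLt_trans h h'))
              · exact hν (Or.inl (h' ▸ h))
            · rcases hm₀μ with h' | h'
              · exact hν (Or.inl (h ▸ h'))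
              · exact hν (Or.inr (h.trans h'))
          rw [this, sub_zero]

end Reduce

section Char
variable {d : ℕ} {n : Fin d → ℕ} [∀ i, NeZero (n i)]

/-- the parameter group for variety points -/
abbrev SignGrp (n : Fin d → ℕ) : Type := ℤˣ × (∀ i : Fin d, Fin (n i) → ℤˣ)

def uval (g : SignGrp n) (a : Idx n) : ℤˣ := g.1 * ∏ i, g.2 i (a i)

/-- the corresponding real point (a rank-1 sign tensor) -/
noncomputable def pt (g : SignGrp n) : Idx n → ℝ := fun a => ((uval g a : ℤ) : ℝ)

def uvalHom (a : Idx n) : SignGrp n →* ℤˣ where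
  toFun g := uval g a
  map_one' := by simp [uval]
  map_mul' g h := by
    simp only [uval, Prod.fst_mul, Prod.snd_mul, Pi.mul_apply, Finset.prod_mul_distrib]
    rw [mul_mul_mul_comm]

lemma uval_sq (g : SignGrp n) (a : Idx n) : uval g a * uval g a = 1 := by
  ext
  rcases Int.units_eq_one_or (uval g a) with h | h <;> rw [h] <;> rfl

lemma eval_pt_zero (g : SignGrp n) {f : MvPolynomial (Idx n) ℝ} (hf : f ∈ Iinf n) :
    eval (pt g) f = 0 := by
  have hker : Iinf n ≤ RingHom.ker (eval (pt g)) := by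
    rw [Iinf, Ideal.span_le]
    rintro p (⟨a, rfl⟩ | ⟨a, b, rfl⟩) <;> simp only [SetLike.mem_coe, RingHom.mem_ker]
    · rw [map_sub, map_pow, map_one, eval_X]
      have := uval_sq g a
      have : ((uval g a : ℤ) : ℝ) * ((uval g a : ℤ) : ℝ) = 1 := by
        rw [← Int.cast_mul, ← Units.val_mul, this]; norm_num
      simp only [pt, pow_two]
      rw [this, sub_self]
    · rw [map_sub, map_mul, map_mul, eval_X, eval_X, eval_X, eval_X]
      have key : uval g a * uval g b = uval g (amin a b) * uval g (amax a b) := by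
        unfold uval
        rw [mul_mul_mul_comm, mul_mul_mul_comm (g.1) _ (g.1) _, ← Finset.prod_mul_distrib,
          ← Finset.prod_mul_distrib]
        congr 1
        apply Finset.prod_congr rfl
        intro i _
        unfold amin amax
        rcases le_total (a i) (b i) with h | h
        · rw [min_eq_left h, max_eq_right h]
        · rw [min_eq_right h, max_eq_left h, mul_comm]
      have : pt g a * pt g b = pt g (amin a b) * pt g (amax a b) := by
        simp only [pt]
        rw [← Int.cast_mul, ← Int.cast_mul, ← Units.val_mul, ← Units.val_mul, key]
      rw [this, sub_self]
  exact RingHom.mem_ker.mp (hker hf)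

/-- character into `ℤˣ` attached to a set of indices -/
noncomputable def chiU (T : Finset (Idx n)) : SignGrp n →* ℤˣ := ∏ a ∈ T, uvalHom a

lemma chiU_apply (T : Finset (Idx n)) (g : SignGrp n) :
    chiU T g = ∏ a ∈ T, uval g a := by
  classical
  induction T using Finset.induction_on with
  | empty => simp [chiU]
  | @insert a T ha ih =>
    rw [chiU, Finset.prod_insert ha, Finset.prod_insert ha, ← chiU]
    rw [MonoidHom.mul_apply, ih]
    rfl

/-- the corresponding real character -/
noncomputable def chiR (T : Finset (Idx n)) : SignGrp n →* ℝ :=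
  ((Int.castRingHom ℝ).toMonoidHom.comp (Units.coeHom ℤ)).comp (chiU T)

lemma chiR_apply (T : Finset (Idx n)) (g : SignGrp n) :
    chiR T g = ∏ a ∈ T, pt g a := by
  simp only [chiR, MonoidHom.comp_apply, chiU_apply]
  rw [map_prod, map_prod]
  rfl

end Char

section Comb
variable {d : ℕ} {n : Fin d → ℕ} [∀ i, NeZero (n i)]

/-- the pairwise standardness condition on a finite set of indices -/
def StdFinset (T : Finset (Idx n)) : Prop :=
  ∀ a ∈ T, ∀ b ∈ T, idxLt a b → ∀ i, a i ≤ b i ∧ (a i = b i → a i = lastF (n i))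

def cnt (T : Finset (Idx n)) (i : Fin d) (j : Fin (n i)) : ℕ :=
  (T.filter (fun a => a i = j)).card

lemma stdFinset_subset {T T' : Finset (Idx n)} (h : T' ⊆ T) (hT : StdFinset T) :
    StdFinset T' := fun a ha b hb => hT a (h ha) b (h hb)

lemma cnt_le_one {T : Finset (Idx n)} (hT : StdFinset T) {i : Fin d} {j : Fin (n i)}
    (hj : j ≠ lastF (n i)) : cnt T i j ≤ 1 := by
  rw [cnt, Finset.card_le_one]
  intro a ha b hb
  obtain ⟨haT, hai⟩ := Finset.mem_filter.mp ha
  obtain ⟨hbT, hbi⟩ := Finset.mem_filter.mp hb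
  by_contra hne
  rcases idxLt_trichotomy a b with h | h | h
  · exact hj ((hai ▸ (hT a haT b hbT h i).2 (hai.trans hbi.symm)))
  · exact hne h
  · exact hj ((hbi ▸ (hT b hbT a haT h i).2 (hbi.trans hai.symm)))

lemma neg_one_pow_mod {k l : ℕ} (h : ((-1 : ℤˣ)) ^ k = (-1) ^ l) : k % 2 = l % 2 := by
  have e1 : ((-1 : ℤˣ)) ^ k = (-1) ^ (k % 2) := by
    conv_lhs => rw [← Nat.div_add_mod k 2, pow_add, pow_mul]
    norm_num
  have e2 : ((-1 : ℤˣ)) ^ l = (-1) ^ (l % 2) := by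
    conv_lhs => rw [← Nat.div_add_mod l 2, pow_add, pow_mul]
    norm_num
  rw [e1, e2] at h
  have hk := Nat.mod_lt k (show 0 < 2 by norm_num)
  have hl := Nat.mod_lt l (show 0 < 2 by norm_num)
  rcases Nat.mod_two_eq_zero_or_one k with hk' | hk' <;>
    rcases Nat.mod_two_eq_zero_or_one l with hl' | hl' <;>
      rw [hk', hl'] at h ⊢ <;> first | rfl | (exfalso; revert h; decide)

/-- evaluation of the character at the global sign flip -/
lemma chiU_global (T : Finset (Idx n)) :
    chiU T ((-1 : ℤˣ), fun _ _ => 1) = (-1) ^ T.card := by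
  rw [chiU_apply]
  have : ∀ a ∈ T, uval ((-1 : ℤˣ), fun _ _ => (1:ℤˣ)) a = -1 := by
    intro a _
    simp [uval]
  rw [Finset.prod_congr rfl this, Finset.prod_const]

/-- the local sign flip at coordinate `(i,j)` -/
def locFlip (i : Fin d) (j : Fin (n i)) : SignGrp n :=
  (1, fun i' j' => if i' = i ∧ (j' : ℕ) = (j : ℕ) then -1 else 1)

lemma uval_locFlip (i : Fin d) (j : Fin (n i)) (a : Idx n) :
    uval (locFlip i j) a = if a i = j then -1 else 1 := by
  unfold uval locFlip
  rw [one_mul]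
  rw [Finset.prod_eq_single_of_mem i (Finset.mem_univ i)]
  · simp [Fin.ext_iff]
  · intro i' _ hi'
    simp [hi']

lemma chiU_locFlip (T : Finset (Idx n)) (i : Fin d) (j : Fin (n i)) :
    chiU T (locFlip i j) = (-1) ^ (cnt T i j) := by
  classical
  rw [chiU_apply, Finset.prod_congr rfl (fun a _ => uval_locFlip i j a),
    ← Finset.prod_filter_mul_prod_filter_not T (fun a => a i = j)]
  rw [Finset.prod_congr rfl (fun a ha => if_pos (Finset.mem_filter.mp ha).2),
    Finset.prod_congr rfl (fun a ha => if_neg (Finset.mem_filter.mp ha).2),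
    Finset.prod_const, Finset.prod_const, one_pow, mul_one, cnt]

/-- the all-last index -/
def lastIdx (n : Fin d → ℕ) [∀ i, NeZero (n i)] : Idx n := fun i => lastF (n i)

lemma std_all_last {T : Finset (Idx n)} (hT : StdFinset T)
    (hcnt : ∀ (i : Fin d) (j : Fin (n i)), j ≠ lastF (n i) → cnt T i j % 2 = 0)
    (hcard : T.card % 2 = 0) : T = ∅ := by
  have hsub : T ⊆ {lastIdx n} := by
    intro a ha
    rw [Finset.mem_singleton]
    funext i
    by_contra hne
    have h1 : cnt T i (a i) ≤ 1 := cnt_le_one hT (by exact hne)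
    have h2 : 1 ≤ cnt T i (a i) :=
      Finset.card_pos.mpr ⟨a, Finset.mem_filter.mpr ⟨ha, rfl⟩⟩
    have := hcnt i (a i) (by exact hne)
    omega
  have := Finset.card_le_card hsub
  rw [Finset.card_singleton] at this
  rw [← Finset.card_eq_zero]
  omega

lemma cnt_erase (T : Finset (Idx n)) (a : Idx n) (ha : a ∈ T) (i : Fin d) (j : Fin (n i)) :
    cnt (T.erase a) i j = cnt T i j - (if a i = j then 1 else 0) := by
  classical
  unfold cnt
  rw [Finset.filter_erase]
  split_ifs with h
  · rw [Finset.card_erase_of_mem (Finset.mem_filter.mpr ⟨ha, h⟩)]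
  · rw [Nat.sub_zero]
    congr 1
    apply Finset.erase_eq_of_notMem
    intro hc
    exact h (Finset.mem_filter.mp hc).2

lemma exists_min_elem {T : Finset (Idx n)} (hT : StdFinset T) (hne : T.Nonempty) :
    ∃ a ∈ T, ∀ b ∈ T, ∀ i, a i ≤ b i := by
  obtain ⟨a, ha, hmin⟩ := exists_idxLt_min T hne
  refine ⟨a, ha, ?_⟩
  intro b hb i
  rcases hmin b hb with rfl | h
  · exact le_refl _
  · exact (hT a ha b hb h i).1

/-- the key reconstruction lemma: a standard set is determined by its parity data -/
lemma std_reconstruct : ∀ (k : ℕ) (T T' : Finset (Idx n)), T.card = k →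
    StdFinset T → StdFinset T' → T.card % 2 = T'.card % 2 →
    (∀ (i : Fin d) (j : Fin (n i)), cnt T i j % 2 = cnt T' i j % 2) → T = T' := by
  intro k
  induction k using Nat.strong_induction_on with
  | _ k ih =>
    intro T T' hcard hT hT' hpar hcnt
    rcases Finset.eq_empty_or_nonempty T with rfl | hTne
    · refine (std_all_last hT' ?_ ?_).symm
      · intro i j hj
        rw [← hcnt i j]
        simp [cnt]
      · rw [← hpar]; simp
    rcases Finset.eq_empty_or_nonempty T' with rfl | hT'ne
    · refine std_all_last hT ?_ ?_
      · intro i j hj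
        rw [hcnt i j]
        simp [cnt]
      · rw [hpar]; simp
    · obtain ⟨a, haT, hamin⟩ := exists_min_elem hT hTne
      obtain ⟨a', haT', hamin'⟩ := exists_min_elem hT' hT'ne
      have hcnt_pos : ∀ (i : Fin d), a i ≠ lastF (n i) → ∃ b' ∈ T', b' i = a i := by
        intro i hne
        have h1 : 1 ≤ cnt T i (a i) :=
          Finset.card_pos.mpr ⟨a, Finset.mem_filter.mpr ⟨haT, rfl⟩⟩
        have h2 : cnt T i (a i) ≤ 1 := cnt_le_one hT hne
        have h3 := hcnt i (a i)
        have h4 : 1 ≤ cnt T' i (a i) := by omega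
        obtain ⟨b', hb'⟩ := Finset.card_pos.mp h4
        exact ⟨b', (Finset.mem_filter.mp hb').1, (Finset.mem_filter.mp hb').2⟩
      have hcnt_pos' : ∀ (i : Fin d), a' i ≠ lastF (n i) → ∃ b ∈ T, b i = a' i := by
        intro i hne
        have h1 : 1 ≤ cnt T' i (a' i) :=
          Finset.card_pos.mpr ⟨a', Finset.mem_filter.mpr ⟨haT', rfl⟩⟩
        have h2 : cnt T' i (a' i) ≤ 1 := cnt_le_one hT' hne
        have h3 := hcnt i (a' i)
        have h4 : 1 ≤ cnt T i (a' i) := by omega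
        obtain ⟨b, hb⟩ := Finset.card_pos.mp h4
        exact ⟨b, (Finset.mem_filter.mp hb).1, (Finset.mem_filter.mp hb).2⟩
      have haa' : a = a' := by
        funext i
        apply le_antisymm
        · by_cases h : a' i = lastF (n i)
          · rw [h]; exact fin_le_lastF _
          · obtain ⟨b, hbT, hbi⟩ := hcnt_pos' i h
            rw [← hbi]
            exact hamin b hbT i
        · by_cases h : a i = lastF (n i)
          · rw [h]; exact fin_le_lastF _
          · obtain ⟨b', hbT', hbi'⟩ := hcnt_pos i h
            rw [← hbi']
            exact hamin' b' hbT' i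
      subst haa'
      have hcard1 : 1 ≤ T.card := Finset.card_pos.mpr hTne
      have hcard1' : 1 ≤ T'.card := Finset.card_pos.mpr hT'ne
      have herase : T.erase a = T'.erase a := by
        apply ih (T.erase a).card
        · rw [Finset.card_erase_of_mem haT]; omega
        · rfl
        · exact stdFinset_subset (Finset.erase_subset _ _) hT
        · exact stdFinset_subset (Finset.erase_subset _ _) hT'
        · rw [Finset.card_erase_of_mem haT, Finset.card_erase_of_mem haT']
          omega
        · intro i j
          rw [cnt_erase T a haT, cnt_erase T' a haT']
          have h3 := hcnt i j
          by_cases h : a i = j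
          · have p1 : 1 ≤ cnt T i j :=
              Finset.card_pos.mpr ⟨a, Finset.mem_filter.mpr ⟨haT, h⟩⟩
            have p2 : 1 ≤ cnt T' i j :=
              Finset.card_pos.mpr ⟨a, Finset.mem_filter.mpr ⟨haT', h⟩⟩
            rw [if_pos h]
            omega
          · rw [if_neg h]
            omega
      have : T = insert a (T.erase a) := (Finset.insert_erase haT).symm
      rw [this, herase, Finset.insert_erase haT']

end Comb

section Indep
variable {d : ℕ} {n : Fin d → ℕ} [∀ i, NeZero (n i)]

lemma stdMon_finset {m : Idx n →₀ ℕ} (hm : StdMon m) : StdFinset m.support := by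
  intro a ha b hb hab
  exact hm.2 a b (Finsupp.mem_support_iff.mp ha) (Finsupp.mem_support_iff.mp hb) hab

lemma stdMon_eq_of_support {m m' : Idx n →₀ ℕ} (hm : StdMon m) (hm' : StdMon m')
    (h : m.support = m'.support) : m = m' := by
  ext a
  by_cases ha : a ∈ m.support
  · have ha' : a ∈ m'.support := h ▸ ha
    have h1 := Finsupp.mem_support_iff.mp ha
    have h2 := Finsupp.mem_support_iff.mp ha'
    have := hm.1 a
    have := hm'.1 a
    omega
  · have ha' : a ∉ m'.support := h ▸ ha
    rw [Finsupp.notMem_support_iff.mp ha, Finsupp.notMem_support_iff.mp ha']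

lemma chiR_inj_std {m m' : Idx n →₀ ℕ} (hm : StdMon m) (hm' : StdMon m')
    (h : chiR m.support = chiR m'.support) : m = m' := by
  have hU : ∀ g, chiU m.support g = chiU m'.support g := by
    intro g
    have := congrFun (congrArg (fun (φ : SignGrp n →* ℝ) => ⇑φ) h) g
    simp only [chiR, MonoidHom.comp_apply] at this
    have h2 : (((chiU m.support g : ℤˣ) : ℤ) : ℝ) = (((chiU m'.support g : ℤˣ) : ℤ) : ℝ) :=
      this
    exact Units.ext (by exact_mod_cast h2)
  apply stdMon_eq_of_support hm hm'
  apply std_reconstruct m.support.card _ _ rfl (stdMon_finset hm) (stdMon_finset hm')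
  · have := hU ((-1 : ℤˣ), fun _ _ => 1)
    rw [chiU_global, chiU_global] at this
    exact neg_one_pow_mod this
  · intro i j
    have := hU (locFlip i j)
    rw [chiU_locFlip, chiU_locFlip] at this
    exact neg_one_pow_mod this

lemma std_supported_eq_zero {f : MvPolynomial (Idx n) ℝ} (hf : f ∈ Iinf n)
    (hstd : ∀ m ∈ f.support, StdMon m) : f = 0 := by
  classical
  rw [← support_eq_empty]
  by_contra hne
  obtain ⟨m₀, hm₀⟩ := Finset.nonempty_of_ne_empty hne
  have hinj : Function.Injective
      (fun m : {m // m ∈ f.support} => chiR (n := n) m.1.support) := by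
    intro m m' h
    exact Subtype.ext (chiR_inj_std (hstd m.1 m.2) (hstd m'.1 m'.2) h)
  have hli := (linearIndependent_monoidHom (SignGrp n) ℝ).comp _ hinj
  have hsum : ∑ m : {m // m ∈ f.support},
      coeff m.1 f • (⇑(chiR (n := n) m.1.support) : SignGrp n → ℝ) = 0 := by
    funext g
    rw [Finset.sum_apply]
    simp only [Pi.smul_apply, smul_eq_mul, Pi.zero_apply]
    have := eval_pt_zero g hf
    rw [eval_eq] at this
    rw [← this,
      ← Finset.sum_coe_sort f.support (fun m => coeff m f * ∏ a ∈ m.support, pt g a ^ m a)]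
    apply Finset.sum_congr rfl
    intro m _
    rw [chiR_apply]
    congr 1
    apply Finset.prod_congr rfl
    intro a ha
    have h1 := (hstd m.1 m.2).1 a
    have h2 := Finsupp.mem_support_iff.mp ha
    have h3 : m.1 a = 1 := by omega
    rw [h3, pow_one]
  have := Fintype.linearIndependent_iff.mp hli (fun m => coeff m.1 f) hsum ⟨m₀, hm₀⟩
  exact absurd this (mem_support_iff.mp hm₀)

end Indep

section Final
variable {d : ℕ} {n : Fin d → ℕ} [∀ i, NeZero (n i)]

lemma bmin_eq_bmax_imp {a b : Idx n} {i : Fin d} (h : bmin a b i = bmax a b i) :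
    bmin a b i = lastF (n i) := by
  unfold bmin bmax at h
  unfold bmin
  by_cases hab : a i = b i
  · rw [if_pos hab]
  · rw [if_neg hab, if_neg hab] at h
    rw [if_neg hab]
    exact absurd h (ne_of_lt (min_lt_max.mpr hab))

lemma groebner_div {f : MvPolynomial (Idx n) ℝ} (hf : f ∈ Iinf n) (hf0 : f ≠ 0)
    {m : Idx n →₀ ℕ} (hm : IsLeadMon f m) :
    ∃ g ∈ Ginf n, ∃ mg, IsLeadMon g mg ∧ mg ≤ m := by
  classical
  by_contra hno
  have hStdm : StdMon m := by
    by_contra hstd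
    exact hno (not_stdMon_exists hstd)
  by_cases hallstd : ∀ m' ∈ f.support, StdMon m'
  · exact hf0 (std_supported_eq_zero hf hallstd)
  · push_neg at hallstd
    set NS := f.support.filter (fun m' => ¬ StdMon m') with hNS
    have hNSne : NS.Nonempty := by
      obtain ⟨m', hm', hn⟩ := hallstd
      exact ⟨m', Finset.mem_filter.mpr ⟨hm', hn⟩⟩
    obtain ⟨μ, hμNS, hμmax⟩ := exists_grevlex_max NS hNSne
    have hμf : μ ∈ f.support := (Finset.mem_filter.mp hμNS).1
    have hμnstd : ¬ StdMon μ := (Finset.mem_filter.mp hμNS).2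
    have hμm : grevlexLt μ m := by
      apply hm.2 μ hμf
      intro h
      exact hμnstd (h ▸ hStdm)
    obtain ⟨r, hrspan, hrstd, hrcoeff⟩ := reduce_aux μ f (by
      intro m' hm' hn
      rcases hμmax m' (Finset.mem_filter.mpr ⟨hm', hn⟩) with h | h
      · exact Or.inr h
      · exact Or.inl h)
    have hrI : r ∈ Iinf n := by
      have hfr : f - r ∈ Iinf n := by rw [← span_Ginf_eq_Iinf]; exact hrspan
      have h2 : r = f - (f - r) := by ring
      rw [h2]
      exact Ideal.sub_mem _ hf hfr
    have hr0 : r = 0 := std_supported_eq_zero hrI hrstd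
    have hcm : coeff m r = coeff m f := by
      apply hrcoeff
      rintro (h | rfl)
      · exact grevlexLt_asymm hμm h
      · exact hμnstd hStdm
    rw [hr0, coeff_zero] at hcm
    exact (mem_support_iff.mp hm.1) hcm.symm

lemma reduced_no_div {g : MvPolynomial (Idx n) ℝ} (hg : g ∈ Ginf n) {m : Idx n →₀ ℕ}
    (hm : m ∈ g.support) {g' : MvPolynomial (Idx n) ℝ} (hg' : g' ∈ Ginf n) (hne : g' ≠ g)
    {m' : Idx n →₀ ℕ} (hm' : IsLeadMon g' m') : ¬ m' ≤ m := by
  intro hle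
  rcases hg' with ⟨c, rfl⟩ | ⟨c, c', hcc, hC', rfl⟩
  · -- g' is a square
    have hm'eq : m' = sqm c := sq_leadMon_unique hm'
    subst hm'eq
    have h2 : (2 : ℕ) ≤ m c := by
      have := Finsupp.le_def.mp hle c
      rw [sqm_apply, if_pos rfl] at this
      exact this
    rcases hg with ⟨a, rfl⟩ | ⟨a, b, hab, hC, rfl⟩
    · rw [sq_support] at hm
      rcases Finset.mem_insert.mp hm with rfl | hm
      · have := h2
        rw [sqm_apply] at this
        split_ifs at this with h
        · exact hne (by rw [h])
        · omega
      · rw [Finset.mem_singleton.mp hm] at h2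
        simp at h2
    · rw [bin_support hab hC] at hm
      rcases Finset.mem_insert.mp hm with rfl | hm
      · have := prm_apply_le_one (idxLt_ne hab) c
        omega
      · rw [Finset.mem_singleton.mp hm] at h2
        have := prm_apply_le_one (bmin_ne_bmax (idxLt_ne hab)) c
        omega
  · -- g' is a binomial
    have hm'eq : m' = prm c c' := bin_leadMon_unique hcc hC' hm'
    subst hm'eq
    have hccne : c ≠ c' := idxLt_ne hcc
    have h1 : (1 : ℕ) ≤ m c := by
      have := Finsupp.le_def.mp hle c
      rw [prm_apply_left hccne] at this
      exact this
    have h1' : (1 : ℕ) ≤ m c' := by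
      have := Finsupp.le_def.mp hle c'
      rw [prm_apply_right hccne] at this
      exact this
    rcases hg with ⟨a, rfl⟩ | ⟨a, b, hab, hC, rfl⟩
    · rw [sq_support] at hm
      rcases Finset.mem_insert.mp hm with rfl | hm
      · have hca : a = c := by
          by_contra h
          rw [sqm_apply, if_neg h] at h1
          omega
        have hca' : a = c' := by
          by_contra h
          rw [sqm_apply, if_neg h] at h1'
          omega
        exact hccne (hca ▸ hca')
      · rw [Finset.mem_singleton.mp hm] at h1
        simp at h1
    · rw [bin_support hab hC] at hm
      rcases Finset.mem_insert.mp hm with rfl | hm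
      · have hc : a = c ∨ b = c := prm_ne_zero_iff.mp (by omega)
        have hc' : a = c' ∨ b = c' := prm_ne_zero_iff.mp (by omega)
        rcases hc with rfl | rfl <;> rcases hc' with rfl | rfl
        · exact hccne rfl
        · exact hne rfl
        · exact idxLt_asymm hab hcc
        · exact hccne rfl
      · rw [Finset.mem_singleton.mp hm] at h1 h1'
        have hc : bmin a b = c ∨ bmax a b = c := prm_ne_zero_iff.mp (by omega)
        have hc' : bmin a b = c' ∨ bmax a b = c' := prm_ne_zero_iff.mp (by omega)
        rcases hc with rfl | rfl <;> rcases hc' with rfl | rfl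
        · exact hccne rfl
        · -- (c, c') = (bmin, bmax): contradicts the Ginf condition for (c,c')
          obtain ⟨i, hi⟩ := hC'
          rcases hi with hi | ⟨hi, hlt⟩
          · exact absurd (bmin_le_bmax a b i) (not_le.mpr hi)
          · rw [bmin_eq_bmax_imp hi] at hlt
            exact lt_irrefl _ hlt
        · exact compLe_not_idxLt (bmin_le_bmax a b) hcc
        · exact hccne rfl

end Final

/-- `𝒢_∞` is the reduced Gröbner basis of `I_∞` w.r.t. grevlex. -/
theorem Ginf_isReducedGroebnerBasis {d : ℕ} (n : Fin d → ℕ) [∀ i, NeZero (n i)] :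
    IsReducedGroebnerBasis (Ginf n) (Iinf n) := by
  refine ⟨⟨span_Ginf_eq_Iinf, ?_⟩, ?_⟩
  · intro f hf hf0 m hm
    exact groebner_div hf hf0 hm
  · intro g hg
    refine ⟨fun m hm => Ginf_monic hg hm, ?_⟩
    intro m hm g' hg' hne m' hm'
    exact reduced_no_div hg hm hg' hne hm'
end
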